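/- arXiv:2211.16804 — 7 statements merged into one kernel-verified Lean document; each statement's English description precedes it below -/
import Mathlib

section
/- Let g(x) = ‖x‖₁ on ℝ^n and ν > 0. Then for every x ∈ ℝ^n, the B-subdifferential ∂_B prox_{νg}(x) consists exactly of the diagonal matrices V ∈ ℝ^{n×n} whose (i,i)-th entry satisfies: V_{i,i} = 0 if |x_i| < ν; V_{i,i} = 1 if |x_i| > ν; and V_{i,i} ∈ {0, 1} if |x_i| = ν. -/
/-!
The objective `ν ‖z‖₁ + ‖z - x‖² / 2` splits into a sum of one-dimensional, `1`-strongly convex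
terms, so `prox_{νg}` is coordinatewise soft thresholding `S`, which is piecewise affine with
kinks exactly at `±ν`. Hence `prox_{νg}` is differentiable exactly at the points `y` with no
`|y i| = ν`, with Jacobian the diagonal matrix of the slopes `S'(y i) ∈ {0, 1}`. Limits of such
Jacobians along `u k → x` are diagonal, with entries forced to `0` or `1` off the kinks of `x`;
conversely each admissible diagonal is attained by pushing the kink coordinates of `x` slightly
inwards (slope `0`) or outwards (slope `1`).
-/

open Filter Topology

/-- The B-subdifferential of a map `F : ℝ^n → ℝ^n` at `x`: the set of limits of
derivatives `∇F(x^(k))` along sequences `x^(k) → x` of differentiability points of `F`. -/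
def Bsubdiff {n : ℕ} (F : EuclideanSpace ℝ (Fin n) → EuclideanSpace ℝ (Fin n))
    (x : EuclideanSpace ℝ (Fin n)) :
    Set (EuclideanSpace ℝ (Fin n) →L[ℝ] EuclideanSpace ℝ (Fin n)) :=
  {V | ∃ u : ℕ → EuclideanSpace ℝ (Fin n),
      Filter.Tendsto u Filter.atTop (nhds x) ∧
      (∀ k, DifferentiableAt ℝ F (u k)) ∧
      Filter.Tendsto (fun k => fderiv ℝ F (u k)) Filter.atTop (nhds V)}

open Matrix

-- equals `(1 - ν / |t|)₊ t` when `ν ≥ 0`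
noncomputable def softThreshold (ν t : ℝ) : ℝ := t + (|t - ν| - |t + ν|) / 2

section softThreshold

variable {ν t : ℝ}

lemma softThreshold_of_le (hν : 0 ≤ ν) (ht : ν ≤ t) : softThreshold ν t = t - ν := by
  rw [softThreshold, abs_of_nonneg (by linarith), abs_of_nonneg (by linarith)]; ring

lemma softThreshold_of_le_neg (hν : 0 ≤ ν) (ht : t ≤ -ν) : softThreshold ν t = t + ν := by
  rw [softThreshold, abs_of_nonpos (by linarith), abs_of_nonpos (by linarith)]; ring

lemma softThreshold_of_abs_le (ht : |t| ≤ ν) : softThreshold ν t = 0 := by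
  obtain ⟨h₁, h₂⟩ := abs_le.mp ht
  rw [softThreshold, abs_of_nonpos (by linarith), abs_of_nonneg (by linarith)]; ring

theorem softThreshold_add_sq_le (hν : 0 ≤ ν) (t z : ℝ) :
    ν * |softThreshold ν t| + (softThreshold ν t - t) ^ 2 / 2 + (z - softThreshold ν t) ^ 2 / 2
      ≤ ν * |z| + (z - t) ^ 2 / 2 := by
  have hz := neg_abs_le z
  have hz' := le_abs_self z
  rcases le_total ν t with ht | ht
  · rw [softThreshold_of_le hν ht, abs_of_nonneg (by linarith)]; nlinarith
  rcases le_total t (-ν) with ht' | ht'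
  · rw [softThreshold_of_le_neg hν ht', abs_of_nonpos (by linarith)]; nlinarith
  · rw [softThreshold_of_abs_le (abs_le.mpr ⟨by linarith, ht⟩)]; nlinarith

noncomputable def softThresholdDeriv (ν t : ℝ) : ℝ := if ν < |t| then 1 else 0

theorem hasDerivAt_softThreshold (hν : 0 ≤ ν) (ht : |t| ≠ ν) :
    HasDerivAt (softThreshold ν) (softThresholdDeriv ν t) t := by
  rcases lt_or_gt_of_ne ht with hin | hout
  · obtain ⟨h₁, h₂⟩ := abs_lt.mp hin
    have hzero : softThreshold ν =ᶠ[𝓝 t] fun _ => 0 := by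
      filter_upwards [Ioo_mem_nhds h₁ h₂] with s hs
      exact softThreshold_of_abs_le (abs_le.mpr ⟨hs.1.le, hs.2.le⟩)
    rw [softThresholdDeriv, if_neg hin.not_gt]
    exact (hasDerivAt_const t 0).congr_of_eventuallyEq hzero
  · rw [softThresholdDeriv, if_pos hout]
    rcases lt_abs.mp hout with hpos | hneg
    · have hshift : softThreshold ν =ᶠ[𝓝 t] fun s => s - ν := by
        filter_upwards [Ioi_mem_nhds hpos] with s hs
        exact softThreshold_of_le hν hs.le
      exact ((hasDerivAt_id t).sub_const ν).congr_of_eventuallyEq hshift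
    · have hshift : softThreshold ν =ᶠ[𝓝 t] fun s => s + ν := by
        filter_upwards [Iio_mem_nhds (show t < -ν by linarith)] with s hs
        exact softThreshold_of_le_neg hν hs.le
      exact ((hasDerivAt_id t).add_const ν).congr_of_eventuallyEq hshift

theorem not_differentiableAt_softThreshold (hν : 0 < ν) (ht : |t| = ν) :
    ¬ DifferentiableAt ℝ (softThreshold ν) t := by
  intro h
  have hkink : ¬ DifferentiableAt ℝ (fun s => |s - t|) t := fun h' =>
    not_differentiableAt_abs_zero (by simpa using differentiableAt_comp_sub_const.mp h')
  have hjump : DifferentiableAt ℝ (fun s => 2 * (softThreshold ν s - s)) t :=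
    (differentiableAt_const _).mul (h.sub differentiableAt_id)
  -- `2 * (softThreshold ν s - s) = |s - ν| - |s + ν|`, and only one of the two kinks sits at `t`
  rcases (abs_eq hν.le).mp ht with rfl | rfl
  · have hsum : DifferentiableAt ℝ (fun s => 2 * (softThreshold t s - s) + |s + t|) t :=
      hjump.add ((differentiableAt_fun_id.add_const t).abs (show t + t ≠ 0 by linarith))
    exact hkink (hsum.congr_of_eventuallyEq
      (.of_forall fun s => by simp only [softThreshold]; ring))
  · have hdiff : DifferentiableAt ℝ (fun s => |s - ν| - 2 * (softThreshold ν s - s)) (-ν) :=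
      ((differentiableAt_fun_id.sub_const ν).abs (show -ν - ν ≠ 0 by linarith)).sub hjump
    exact hkink (hdiff.congr_of_eventuallyEq
      (.of_forall fun s => by simp only [softThreshold, sub_neg_eq_add]; ring))

def IsSoftThresholdBSlope (ν t b : ℝ) : Prop :=
  (|t| < ν → b = 0) ∧ (ν < |t| → b = 1) ∧ (|t| = ν → b = 0 ∨ b = 1)

theorem IsSoftThresholdBSlope.of_tendsto {α : Type*} {l : Filter α} [l.NeBot] {s : α → ℝ}
    {b : ℝ} (hs : Tendsto s l (𝓝 t))
    (hb : Tendsto (fun k => softThresholdDeriv ν (s k)) l (𝓝 b)) :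
    IsSoftThresholdBSlope ν t b := by
  refine ⟨fun ht => ?_, fun ht => ?_, fun _ => ?_⟩
  · refine tendsto_nhds_unique hb (tendsto_const_nhds.congr' ?_)
    filter_upwards [hs.abs.eventually_lt_const ht] with k hk
    rw [softThresholdDeriv, if_neg hk.not_gt]
  · refine tendsto_nhds_unique hb (tendsto_const_nhds.congr' ?_)
    filter_upwards [hs.abs.eventually_const_lt ht] with k hk
    rw [softThresholdDeriv, if_pos hk]
  · have : b ∈ ({0, 1} : Set ℝ) := (Set.toFinite _).isClosed.mem_of_tendsto hb
      (.of_forall fun k => by unfold softThresholdDeriv; split_ifs <;> simp)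
    simpa using this

theorem IsSoftThresholdBSlope.exists_tendsto (hν : 0 < ν) {b : ℝ}
    (h : IsSoftThresholdBSlope ν t b) :
    ∃ s : ℕ → ℝ, Tendsto s atTop (𝓝 t) ∧ ∀ k, |s k| ≠ ν ∧ softThresholdDeriv ν (s k) = b := by
  by_cases ht : |t| = ν
  · have hk : ∀ k : ℕ, 0 < 1 / ((k : ℝ) + 1) ∧ 1 / ((k : ℝ) + 1) ≤ 1 := fun k =>
      ⟨Nat.one_div_pos_of_nat, div_le_one_of_le₀ (by simp) (by positivity)⟩
    -- push `t` off the kink, inwards if `b = 0` and outwards if `b = 1`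
    rcases h.2.2 ht with rfl | rfl
    · refine ⟨fun k => (1 - 1 / (k + 1)) * t,
        by simpa using (tendsto_one_div_add_atTop_nhds_zero_nat.const_sub 1).mul_const t,
        fun k => ?_⟩
      obtain ⟨hk₀, hk₁⟩ := hk k
      have habs : |(1 - 1 / ((k : ℝ) + 1)) * t| = (1 - 1 / (k + 1)) * ν := by
        rw [abs_mul, ht, abs_of_nonneg (by linarith)]
      rw [softThresholdDeriv, habs, if_neg (by nlinarith)]
      exact ⟨by nlinarith, rfl⟩
    · refine ⟨fun k => (1 + 1 / (k + 1)) * t,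
        by simpa using (tendsto_one_div_add_atTop_nhds_zero_nat.const_add 1).mul_const t,
        fun k => ?_⟩
      obtain ⟨hk₀, -⟩ := hk k
      have habs : |(1 + 1 / ((k : ℝ) + 1)) * t| = (1 + 1 / (k + 1)) * ν := by
        rw [abs_mul, ht, abs_of_pos (by linarith)]
      rw [softThresholdDeriv, habs, if_pos (by nlinarith)]
      exact ⟨by nlinarith, rfl⟩
  · refine ⟨fun _ => t, tendsto_const_nhds, fun _ => ⟨ht, ?_⟩⟩
    rcases lt_or_gt_of_ne ht with hin | hout
    · rw [softThresholdDeriv, if_neg hin.not_gt, h.1 hin]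
    · rw [softThresholdDeriv, if_pos hout, h.2.1 hout]

end softThreshold

section EuclideanSpace

variable {ι : Type*}

def coordwise (f : ℝ → ℝ) (y : EuclideanSpace ℝ ι) : EuclideanSpace ℝ ι :=
  WithLp.toLp 2 fun i => f (y i)

@[simp] lemma coordwise_apply (f : ℝ → ℝ) (y : EuclideanSpace ℝ ι) (i : ι) :
    coordwise f y i = f (y i) := rfl

@[simp] lemma toEuclideanCLM_diagonal_apply [Fintype ι] [DecidableEq ι] (d : ι → ℝ)
    (z : EuclideanSpace ℝ ι) (i : ι) : toEuclideanCLM (𝕜 := ℝ) (diagonal d) z i = d i * z i := by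
  simp [mulVec_diagonal]

lemma eq_toEuclideanCLM_diagonal_iff [Fintype ι] [DecidableEq ι]
    {V : EuclideanSpace ℝ ι →L[ℝ] EuclideanSpace ℝ ι} {d : ι → ℝ} :
    V = toEuclideanCLM (𝕜 := ℝ) (diagonal d) ↔ ∀ z i, V z i = d i * z i := by
  refine ⟨fun h z i => by simp [h], fun h => ?_⟩
  ext z i
  simp [h]

theorem exists_diagonal_of_tendsto {α : Type*} [Fintype ι] [DecidableEq ι] {l : Filter α}
    [l.NeBot] {e : α → ι → ℝ} {V : EuclideanSpace ℝ ι →L[ℝ] EuclideanSpace ℝ ι}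
    (h : Tendsto (fun k => toEuclideanCLM (𝕜 := ℝ) (diagonal (e k))) l (𝓝 V)) :
    ∃ d : ι → ℝ, (∀ i, Tendsto (fun k => e k i) l (𝓝 (d i))) ∧
      V = toEuclideanCLM (𝕜 := ℝ) (diagonal d) := by
  have happ : ∀ z i, Tendsto (fun k => e k i * z i) l (𝓝 (V z i)) := fun z i => by
    have hcont : Continuous fun T : EuclideanSpace ℝ ι →L[ℝ] EuclideanSpace ℝ ι => T z i := by
      fun_prop
    simpa [Function.comp_def] using (hcont.tendsto V).comp h
  have hdiag : ∀ i, Tendsto (fun k => e k i) l (𝓝 (V (EuclideanSpace.single i 1) i)) := fun i => by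
    simpa using happ (EuclideanSpace.single i 1) i
  refine ⟨fun i => V (EuclideanSpace.single i 1) i, hdiag, eq_toEuclideanCLM_diagonal_iff.mpr ?_⟩
  exact fun z i => tendsto_nhds_unique (happ z i) ((hdiag i).mul_const (z i))

theorem hasFDerivAt_coordwise [Fintype ι] [DecidableEq ι] {f : ℝ → ℝ} {f' : ι → ℝ}
    {y : EuclideanSpace ℝ ι} (hf : ∀ i, HasDerivAt f (f' i) (y i)) :
    HasFDerivAt (coordwise f) (toEuclideanCLM (𝕜 := ℝ) (diagonal f')) y := by
  rw [← hasFDerivWithinAt_univ, hasFDerivWithinAt_piLp]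
  intro i
  rw [hasFDerivWithinAt_univ]
  refine ((hf i).comp_hasFDerivAt y (PiLp.hasFDerivAt_apply (𝕜 := ℝ) 2 y i)).congr_fderiv ?_
  ext z
  simp

theorem DifferentiableAt.of_coordwise [Fintype ι] {f : ℝ → ℝ} {y : EuclideanSpace ℝ ι}
    (h : DifferentiableAt ℝ (coordwise f) y) (i : ι) : DifferentiableAt ℝ f (y i) := by
  classical
  let line : ℝ → EuclideanSpace ℝ ι := fun s => y + (s - y i) • EuclideanSpace.single i 1
  have hline : line (y i) = y := by simp [line]
  have hcoord : DifferentiableAt ℝ (fun z : EuclideanSpace ℝ ι => f (z i)) (line (y i)) := by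
    rw [hline]; exact (differentiableAt_piLp 2).mp h i
  refine (hcoord.comp (y i) (by fun_prop)).congr_of_eventuallyEq (.of_forall fun s => ?_)
  simp [line]

theorem coordwise_softThreshold_add_norm_sq_le [Fintype ι] {ν : ℝ} (hν : 0 ≤ ν)
    (x z : EuclideanSpace ℝ ι) :
    ν * ∑ i, |coordwise (softThreshold ν) x i| + ‖coordwise (softThreshold ν) x - x‖ ^ 2 / 2
        + ‖z - coordwise (softThreshold ν) x‖ ^ 2 / 2
      ≤ ν * ∑ i, |z i| + ‖z - x‖ ^ 2 / 2 := by
  simp only [EuclideanSpace.real_norm_sq_eq, PiLp.sub_apply, coordwise_apply, Finset.mul_sum,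
    Finset.sum_div, ← Finset.sum_add_distrib]
  exact Finset.sum_le_sum fun i _ => softThreshold_add_sq_le hν (x i) (z i)

theorem eq_coordwise_softThreshold_of_isMinOn [Fintype ι] {ν : ℝ} (hν : 0 ≤ ν)
    {x p : EuclideanSpace ℝ ι} (hp : IsMinOn
      (fun z : EuclideanSpace ℝ ι => ν * (∑ i, |z i|) + ‖z - x‖ ^ 2 / 2) Set.univ p) :
    p = coordwise (softThreshold ν) x := by
  have hle := coordwise_softThreshold_add_norm_sq_le hν x p
  have hmin := isMinOn_iff.mp hp (coordwise (softThreshold ν) x) (Set.mem_univ _)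
  have hsq : ‖p - coordwise (softThreshold ν) x‖ ^ 2 = 0 :=
    le_antisymm (by simp only at hmin; linarith) (sq_nonneg _)
  simpa [sub_eq_zero] using hsq

end EuclideanSpace

section Bsubdiff

variable {n : ℕ} {ν : ℝ}

theorem Bsubdiff_softThreshold_subset (hν : 0 < ν) (x : EuclideanSpace ℝ (Fin n)) :
    Bsubdiff (coordwise (softThreshold ν)) x ⊆ {V | ∃ d : Fin n → ℝ,
      (∀ i, IsSoftThresholdBSlope ν (x i) (d i)) ∧
        V = toEuclideanCLM (𝕜 := ℝ) (diagonal d)} := by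
  rintro V ⟨u, hu, hdiff, hV⟩
  have hsmooth : ∀ k i, |u k i| ≠ ν := fun k i hk =>
    not_differentiableAt_softThreshold hν hk ((hdiff k).of_coordwise i)
  have hderiv : ∀ k, fderiv ℝ (coordwise (softThreshold ν)) (u k) =
      toEuclideanCLM (𝕜 := ℝ) (diagonal fun i => softThresholdDeriv ν (u k i)) :=
    fun k => (hasFDerivAt_coordwise fun i => hasDerivAt_softThreshold hν.le (hsmooth k i)).fderiv
  simp only [hderiv] at hV
  obtain ⟨d, hd, rfl⟩ := exists_diagonal_of_tendsto hV
  exact ⟨d, fun i => .of_tendsto ((PiLp.continuous_apply 2 _ i).tendsto x |>.comp hu) (hd i), rfl⟩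

theorem diagonal_mem_Bsubdiff_softThreshold (hν : 0 < ν) {x : EuclideanSpace ℝ (Fin n)}
    {d : Fin n → ℝ} (hd : ∀ i, IsSoftThresholdBSlope ν (x i) (d i)) :
    toEuclideanCLM (𝕜 := ℝ) (diagonal d) ∈ Bsubdiff (coordwise (softThreshold ν)) x := by
  choose s hs hsk using fun i => (hd i).exists_tendsto hν
  have hderiv : ∀ k, HasFDerivAt (coordwise (softThreshold ν))
      (toEuclideanCLM (𝕜 := ℝ) (diagonal d)) (WithLp.toLp 2 fun i => s i k) := by
    intro k
    have := hasFDerivAt_coordwise (y := WithLp.toLp 2 fun i => s i k) fun i =>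
      hasDerivAt_softThreshold hν.le (hsk i k).1
    simpa only [(hsk _ k).2] using this
  refine ⟨fun k => WithLp.toLp 2 fun i => s i k, ?_, fun k => (hderiv k).differentiableAt, ?_⟩
  · exact (PiLp.continuous_toLp 2 _).tendsto (WithLp.ofLp x) |>.comp (tendsto_pi_nhds.mpr hs)
  · simp only [fun k => (hderiv k).fderiv]
    exact tendsto_const_nhds

end Bsubdiff

/-- For `g = ‖·‖₁` and `ν > 0`, the B-subdifferential of the proximal
map `prox_{νg}` at `x` consists exactly of the diagonal matrices whose `(i,i)` entry is
`0` if `|x_i| < ν`, `1` if `|x_i| > ν`, and belongs to `{0, 1}` if `|x_i| = ν`. -/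
theorem statement4 {n : ℕ} (ν : ℝ) (hν : 0 < ν)
    (prox : EuclideanSpace ℝ (Fin n) → EuclideanSpace ℝ (Fin n))
    (hprox : ∀ x, IsMinOn
      (fun z : EuclideanSpace ℝ (Fin n) => ν * (∑ i, |z i|) + ‖z - x‖ ^ 2 / 2)
      Set.univ (prox x))
    (x : EuclideanSpace ℝ (Fin n)) :
    Bsubdiff prox x = {V | ∃ d : Fin n → ℝ,
      (∀ i, (|x i| < ν → d i = 0) ∧ (ν < |x i| → d i = 1) ∧ (|x i| = ν → d i = 0 ∨ d i = 1)) ∧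
      ∀ z, ∀ i, V z i = d i * z i} := by
  obtain rfl : prox = coordwise (softThreshold ν) :=
    funext fun y => eq_coordwise_softThreshold_of_isMinOn hν.le (hprox y)
  ext V
  refine ⟨fun hV => ?_, fun ⟨d, hd, hVd⟩ => ?_⟩
  · obtain ⟨d, hd, rfl⟩ := Bsubdiff_softThreshold_subset hν x hV
    exact ⟨d, hd, eq_toEuclideanCLM_diagonal_iff.mp rfl⟩
  · rw [eq_toEuclideanCLM_diagonal_iff.mpr hVd]
    exact diagonal_mem_Bsubdiff_softThreshold hν hd
end

section
/- Let g(x) = ‖x‖₂ on ℝ^n and ν > 0. Then for every x ∈ ℝ^n, the B-subdifferential of the proximal map satisfies: ∂_B prox_{νg}(x) = {O} if ‖x‖₂ < ν; ∂_B prox_{νg}(x) = { (ν/‖x‖₂)(xxᵀ/‖x‖₂² − I) + I } if ‖x‖₂ > ν; and ∂_B prox_{νg}(x) = { O, xxᵀ/‖x‖₂² } if ‖x‖₂ = ν, where O denotes the n×n zero matrix and I the identity matrix. -/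
/-!
Writing `r = ‖z‖`, the objective `ν‖z‖ + ‖z - x‖²/2` is at least `νr + (r - ‖x‖)²/2`, with equality
only when `z` is a nonnegative multiple of `x`; minimizing in `r` shows that `prox` is block soft
thresholding `(1 - ν/‖x‖)₊ x`. This map vanishes on the open ball of radius `ν`, and outside the
closed ball it is smooth with derivative `(ν/‖y‖)(yyᵀ/‖y‖² - I) + I`, continuous away from `0`. On
the sphere `‖y‖ = ν` it is not differentiable, since along the ray through `y` it is
`t ↦ max t 0 • y`. So off the sphere the B-subdifferential is the singleton of the derivative,
while on the sphere a sequence of points of differentiability either visits the ball infinitely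
often or eventually stays outside the closed ball, giving the limits `O` and `xxᵀ/‖x‖²`.
-/

open Filter Topology RealInnerProductSpace InnerProductSpace

section BlockSoftThreshold

variable {E : Type*} [NormedAddCommGroup E] {ν : ℝ} {x y z : E}

lemma eq_zero_of_prox_objective_le (hx : ‖x‖ ≤ ν)
    (h : ν * ‖z‖ + ‖z - x‖ ^ 2 / 2 ≤ ‖x‖ ^ 2 / 2) : z = 0 := by
  have hdist : (‖z‖ - ‖x‖) ^ 2 ≤ ‖z - x‖ ^ 2 := by
    rw [← sq_abs]; gcongr; exact abs_norm_sub_norm_le z x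
  have hz : ‖z‖ ^ 2 ≤ 0 := by nlinarith [norm_nonneg z]
  exact norm_eq_zero.mp (by nlinarith [norm_nonneg z])

variable [InnerProductSpace ℝ E]

noncomputable def blockSoftThreshold (ν : ℝ) (x : E) : E :=
  if ‖x‖ ≤ ν then 0 else (1 - ν / ‖x‖) • x

lemma eq_of_prox_objective_le (hν : 0 ≤ ν) (hx : ν < ‖x‖)
    (h : ν * ‖z‖ + ‖z - x‖ ^ 2 / 2 ≤ ν * ‖x‖ - ν ^ 2 / 2) : z = (1 - ν / ‖x‖) • x := by
  have hx0 : ‖x‖ ≠ 0 := (hν.trans_lt hx).ne'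
  -- `h` says `(‖z‖ - ‖x‖ + ν)² / 2 + (‖z‖ ‖x‖ - ⟪z, x⟫) ≤ 0`, a sum of two nonnegative terms.
  have hexp : ‖z - x‖ ^ 2 = ‖z‖ ^ 2 - 2 * ⟪z, x⟫ + ‖x‖ ^ 2 := norm_sub_sq_real z x
  have hcs : ⟪z, x⟫ ≤ ‖z‖ * ‖x‖ := real_inner_le_norm z x
  have hinner : ⟪z, x⟫ = ‖z‖ * ‖x‖ := by nlinarith [sq_nonneg (‖z‖ - ‖x‖ + ν)]
  have hnorm : ‖z‖ = ‖x‖ - ν := by nlinarith [sq_nonneg (‖z‖ - ‖x‖ + ν)]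
  have hpar : ‖x‖ • z = ‖z‖ • x := inner_eq_norm_mul_iff_real.mp hinner
  calc z = ‖x‖⁻¹ • ‖x‖ • z := (inv_smul_smul₀ hx0 z).symm
    _ = (1 - ν / ‖x‖) • x := by rw [hpar, smul_smul, hnorm]; congr 1; field_simp

lemma eq_blockSoftThreshold_of_isMinOn (hν : 0 ≤ ν)
    (h : IsMinOn (fun z => ν * ‖z‖ + ‖z - x‖ ^ 2 / 2) Set.univ z) :
    z = blockSoftThreshold ν x := by
  have hle := isMinOn_iff.mp h (blockSoftThreshold ν x) trivial
  unfold blockSoftThreshold at hle ⊢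
  split_ifs at hle ⊢ with hx
  · exact eq_zero_of_prox_objective_le hx (by simpa using hle)
  · push Not at hx
    have hx0 : 0 < ‖x‖ := hν.trans_lt hx
    have hc : 0 ≤ 1 - ν / ‖x‖ := sub_nonneg.mpr ((div_le_one hx0).mpr hx.le)
    refine eq_of_prox_objective_le hν hx (hle.trans_eq ?_)
    have hsub : (1 - ν / ‖x‖) • x - x = (-(ν / ‖x‖)) • x := by module
    rw [hsub, norm_smul, norm_smul, Real.norm_of_nonneg hc, norm_neg,
      Real.norm_of_nonneg (by positivity)]
    field_simp
    ring

noncomputable def blockSoftThresholdDeriv (ν : ℝ) (y : E) : E →L[ℝ] E :=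
  (ν / ‖y‖) • ((‖y‖ ^ 2)⁻¹ • rankOne ℝ y y - ContinuousLinearMap.id ℝ E) +
    ContinuousLinearMap.id ℝ E

lemma blockSoftThresholdDeriv_apply (ν : ℝ) (y z : E) :
    blockSoftThresholdDeriv ν y z = (ν / ‖y‖) • ((⟪y, z⟫ / ‖y‖ ^ 2) • y - z) + z := by
  simp [blockSoftThresholdDeriv, div_eq_inv_mul, smul_smul]

lemma continuousAt_blockSoftThresholdDeriv (hy : y ≠ 0) :
    ContinuousAt (blockSoftThresholdDeriv ν) y := by
  have hy0 : ‖y‖ ≠ 0 := norm_ne_zero_iff.mpr hy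
  have hrank : ContinuousAt (fun w : E => rankOne ℝ w w) y :=
    ((rankOne ℝ).continuous.clm_apply continuous_id).continuousAt
  unfold blockSoftThresholdDeriv
  fun_prop (disch := positivity)

lemma hasFDerivAt_blockSoftThreshold_of_norm_lt (hy : ‖y‖ < ν) :
    HasFDerivAt (blockSoftThreshold ν) (0 : E →L[ℝ] E) y := by
  refine (hasFDerivAt_const 0 y).congr_of_eventuallyEq ?_
  filter_upwards [(isOpen_lt continuous_norm continuous_const).mem_nhds hy] with w hw
  exact if_pos (le_of_lt hw)

lemma hasFDerivAt_norm_of_ne_zero (hy : y ≠ 0) :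
    HasFDerivAt (‖·‖) (‖y‖⁻¹ • innerSL ℝ y) y := by
  have h := (hasStrictFDerivAt_norm_sq y).hasFDerivAt.sqrt (by positivity)
  simp only [Real.sqrt_sq (norm_nonneg _)] at h
  convert h using 1
  ext z
  simp only [smul_apply, coe_innerSL_apply, smul_eq_mul, one_div, mul_inv_rev,
    nsmul_eq_mul, Nat.cast_ofNat]
  ring

lemma hasFDerivAt_blockSoftThreshold_of_lt_norm (hν : 0 ≤ ν) (hy : ν < ‖y‖) :
    HasFDerivAt (blockSoftThreshold ν) (blockSoftThresholdDeriv ν y) y := by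
  have hy0 : 0 < ‖y‖ := hν.trans_lt hy
  have hscale : HasFDerivAt (fun w : E => 1 - ν * ‖w‖⁻¹)
      (-(ν • ((-(‖y‖ ^ 2)⁻¹) • ‖y‖⁻¹ • innerSL ℝ y))) y :=
    (((hasDerivAt_inv hy0.ne').comp_hasFDerivAt y
      (hasFDerivAt_norm_of_ne_zero (norm_pos_iff.mp hy0))).const_mul ν).const_sub 1
  refine ((hscale.smul (hasFDerivAt_id y)).congr_of_eventuallyEq ?_).congr_fderiv ?_
  · filter_upwards [(isOpen_lt continuous_const continuous_norm).mem_nhds hy] with w hw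
    simp [blockSoftThreshold, not_le.mpr hw, div_eq_mul_inv]
  · ext z
    simp only [neg_smul, smul_neg, neg_neg, id_eq, add_apply,
      smul_apply, ContinuousLinearMap.id_apply,
      ContinuousLinearMap.smulRight_apply, coe_innerSL_apply, smul_eq_mul,
      blockSoftThresholdDeriv_apply]
    module

lemma not_differentiableAt_max_zero : ¬ DifferentiableAt ℝ (fun t : ℝ => max t 0) 0 := by
  intro h
  have habs : (abs : ℝ → ℝ) = fun t => 2 * max t 0 - t := by
    funext t
    rcases le_total t 0 with ht | ht
    · rw [max_eq_right ht, abs_of_nonpos ht]; ring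
    · rw [max_eq_left ht, abs_of_nonneg ht]; ring
  apply not_differentiableAt_abs_zero
  rw [habs]
  exact (h.const_mul 2).sub differentiableAt_id

lemma not_differentiableAt_blockSoftThreshold (hν : 0 < ν) (hy : ‖y‖ = ν) :
    ¬ DifferentiableAt ℝ (blockSoftThreshold ν) y := by
  intro h
  have hray : (fun t : ℝ => blockSoftThreshold ν ((1 + t) • y)) =ᶠ[𝓝 0]
      fun t => max t 0 • y := by
    filter_upwards [Ioi_mem_nhds (show (-1 : ℝ) < 0 by norm_num)] with t ht
    have hnorm : ‖(1 + t) • y‖ = (1 + t) * ν := by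
      rw [norm_smul, Real.norm_of_nonneg (by linarith [Set.mem_Ioi.mp ht]), hy]
    rcases le_or_gt t 0 with ht0 | ht0
    · rw [blockSoftThreshold, if_pos (by nlinarith), max_eq_right ht0, zero_smul]
    · rw [blockSoftThreshold, if_neg (by nlinarith), max_eq_left ht0.le, hnorm, smul_smul]
      congr 1
      field_simp
      ring
  have hline : DifferentiableAt ℝ (fun t : ℝ => (1 + t) • y) 0 := by fun_prop
  have hcomp : DifferentiableAt ℝ (fun t : ℝ => blockSoftThreshold ν ((1 + t) • y)) 0 := by
    refine DifferentiableAt.comp (g := blockSoftThreshold ν) 0 ?_ hline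
    simpa using h
  have hmax : (fun t : ℝ => max t 0) = fun t => (ν ^ 2)⁻¹ * innerSL ℝ y (max t 0 • y) := by
    funext t
    rw [innerSL_apply_apply, real_inner_smul_right, real_inner_self_eq_norm_sq, hy]
    field_simp
  apply not_differentiableAt_max_zero
  rw [hmax]
  exact ((innerSL ℝ y).differentiableAt.comp 0
    (hray.differentiableAt_iff.mp hcomp)).const_mul (ν ^ 2)⁻¹

end BlockSoftThreshold

section FDerivLimits

variable {𝕜 E F : Type*} [NontriviallyNormedField 𝕜] [NormedAddCommGroup E] [NormedSpace 𝕜 E]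
  [NormedAddCommGroup F] [NormedSpace 𝕜 F] {f : E → F} {f' : E → E →L[𝕜] F} {U : Set E} {x : E}

lemma tendsto_fderiv_of_tendsto_nhdsWithin (hf : ∀ y ∈ U, HasFDerivAt f (f' y) y)
    (hc : ContinuousWithinAt f' U x) {ι : Type*} {l : Filter ι} {v : ι → E}
    (hv : Tendsto v l (𝓝[U] x)) : Tendsto (fun k => fderiv 𝕜 f (v k)) l (𝓝 (f' x)) :=
  (hc.tendsto.comp hv).congr' <|
    (hv.eventually self_mem_nhdsWithin).mono fun _ hk => (hf _ hk).fderiv.symm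

lemma eq_of_tendsto_fderiv_of_frequently_mem (hf : ∀ y ∈ U, HasFDerivAt f (f' y) y)
    (hc : ContinuousWithinAt f' U x) {u : ℕ → E} (hu : Tendsto u atTop (𝓝 x))
    (hU : ∃ᶠ k in atTop, u k ∈ U) {V : E →L[𝕜] F}
    (hV : Tendsto (fun k => fderiv 𝕜 f (u k)) atTop (𝓝 V)) : V = f' x := by
  obtain ⟨φ, hφ, hφU⟩ := extraction_of_frequently_atTop hU
  refine tendsto_nhds_unique (hV.comp hφ.tendsto_atTop) ?_
  exact tendsto_fderiv_of_tendsto_nhdsWithin hf hc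
    (tendsto_nhdsWithin_iff.mpr ⟨hu.comp hφ.tendsto_atTop, .of_forall hφU⟩)

end FDerivLimits

section Bsubdifferential

variable {n : ℕ} {F : EuclideanSpace ℝ (Fin n) → EuclideanSpace ℝ (Fin n)}
  {F' : EuclideanSpace ℝ (Fin n) → EuclideanSpace ℝ (Fin n) →L[ℝ] EuclideanSpace ℝ (Fin n)}
  {U : Set (EuclideanSpace ℝ (Fin n))} {x : EuclideanSpace ℝ (Fin n)}

lemma mem_Bsubdiff_of_mem_closure (hF : ∀ y ∈ U, HasFDerivAt F (F' y) y) (hx : x ∈ closure U)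
    (hc : ContinuousWithinAt F' U x) : F' x ∈ Bsubdiff F x := by
  obtain ⟨u, huU, hu⟩ := mem_closure_iff_seq_limit.mp hx
  exact ⟨u, hu, fun k => (hF _ (huU k)).differentiableAt,
    tendsto_fderiv_of_tendsto_nhdsWithin hF hc (tendsto_nhdsWithin_iff.mpr ⟨hu, .of_forall huU⟩)⟩

lemma Bsubdiff_eq_singleton (hF : ∀ᶠ y in 𝓝 x, HasFDerivAt F (F' y) y)
    (hc : ContinuousAt F' x) : Bsubdiff F x = {F' x} := by
  ext V
  constructor
  · rintro ⟨u, hu, -, hV⟩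
    exact eq_of_tendsto_fderiv_of_frequently_mem (fun _ hy => hy) hc.continuousWithinAt hu
      (hu.eventually hF).frequently hV
  · rintro rfl
    exact mem_Bsubdiff_of_mem_closure (fun _ hy => hy) (subset_closure hF.self_of_nhds)
      hc.continuousWithinAt

variable {ν : ℝ}

lemma Bsubdiff_blockSoftThreshold_of_norm_lt (hx : ‖x‖ < ν) :
    Bsubdiff (blockSoftThreshold ν) x = {0} :=
  Bsubdiff_eq_singleton (F' := fun _ => 0)
    (((isOpen_lt continuous_norm continuous_const).eventually_mem hx).mono
      fun _ hy => hasFDerivAt_blockSoftThreshold_of_norm_lt hy)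
    continuousAt_const

lemma Bsubdiff_blockSoftThreshold_of_lt_norm (hν : 0 ≤ ν) (hx : ν < ‖x‖) :
    Bsubdiff (blockSoftThreshold ν) x = {blockSoftThresholdDeriv ν x} :=
  Bsubdiff_eq_singleton
    (((isOpen_lt continuous_const continuous_norm).eventually_mem hx).mono
      fun _ hy => hasFDerivAt_blockSoftThreshold_of_lt_norm hν hy)
    (continuousAt_blockSoftThresholdDeriv (norm_pos_iff.mp (hν.trans_lt hx)))

lemma Bsubdiff_blockSoftThreshold_of_norm_eq (hν : 0 < ν) (hx : ‖x‖ = ν) :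
    Bsubdiff (blockSoftThreshold ν) x = {0, blockSoftThresholdDeriv ν x} := by
  have hsphere : x ∈ Metric.sphere 0 ν := mem_sphere_zero_iff_norm.mpr hx
  have hinner : ∀ y ∈ Metric.ball (0 : EuclideanSpace ℝ (Fin n)) ν,
      HasFDerivAt (blockSoftThreshold ν) 0 y :=
    fun y hy => hasFDerivAt_blockSoftThreshold_of_norm_lt (mem_ball_zero_iff.mp hy)
  have houter : ∀ y ∈ (Metric.closedBall (0 : EuclideanSpace ℝ (Fin n)) ν)ᶜ,
      HasFDerivAt (blockSoftThreshold ν) (blockSoftThresholdDeriv ν y) y :=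
    fun y hy => hasFDerivAt_blockSoftThreshold_of_lt_norm hν.le
      (not_le.mp (mt mem_closedBall_zero_iff.mpr hy))
  have hc : ContinuousWithinAt (blockSoftThresholdDeriv ν)
      (Metric.closedBall (0 : EuclideanSpace ℝ (Fin n)) ν)ᶜ x :=
    (continuousAt_blockSoftThresholdDeriv
      (ne_zero_of_mem_sphere hν.ne' ⟨x, hsphere⟩)).continuousWithinAt
  ext V
  constructor
  · rintro ⟨u, hu, hdiff, hV⟩
    by_cases hfreq : ∃ᶠ k in atTop, u k ∈ Metric.ball (0 : EuclideanSpace ℝ (Fin n)) ν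
    · exact .inl (eq_of_tendsto_fderiv_of_frequently_mem hinner continuousWithinAt_const hu
        hfreq hV)
    · -- points of differentiability avoid the sphere, so `u` eventually leaves the closed ball
      refine .inr (eq_of_tendsto_fderiv_of_frequently_mem houter hc hu ?_ hV)
      refine (not_frequently.mp hfreq).frequently.mono fun k hk hle => ?_
      refine not_differentiableAt_blockSoftThreshold hν ?_ (hdiff k)
      exact le_antisymm (mem_closedBall_zero_iff.mp hle)
        (not_lt.mp (mt mem_ball_zero_iff.mpr hk))
  · rintro (rfl | rfl)
    · exact mem_Bsubdiff_of_mem_closure (F' := fun _ => 0) hinner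
        (frontier_subset_closure (by rwa [frontier_ball 0 hν.ne'])) continuousWithinAt_const
    · exact mem_Bsubdiff_of_mem_closure houter
        (frontier_subset_closure (by rwa [frontier_compl, frontier_closedBall 0 hν.ne'])) hc

end Bsubdifferential

/-- For `g = ‖·‖₂` and `ν > 0`, the B-subdifferential of the proximal
map `prox_{νg}` at `x` equals `{O}` if `‖x‖ < ν`, equals the singleton consisting of
`(ν/‖x‖)(xxᵀ/‖x‖² − I) + I` if `‖x‖ > ν`, and equals `{O, xxᵀ/‖x‖²}` if `‖x‖ = ν`
(operators described through their action on vectors `z`). -/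
theorem statement5 {n : ℕ} (ν : ℝ) (hν : 0 < ν)
    (prox : EuclideanSpace ℝ (Fin n) → EuclideanSpace ℝ (Fin n))
    (hprox : ∀ x, IsMinOn
      (fun z : EuclideanSpace ℝ (Fin n) => ν * ‖z‖ + ‖z - x‖ ^ 2 / 2)
      Set.univ (prox x))
    (x : EuclideanSpace ℝ (Fin n)) :
    (‖x‖ < ν → Bsubdiff prox x = {0}) ∧
    (ν < ‖x‖ → Bsubdiff prox x =
      {V | ∀ z, V z = (ν / ‖x‖) • ((⟪x, z⟫ / ‖x‖ ^ 2) • x - z) + z}) ∧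
    (‖x‖ = ν → Bsubdiff prox x =
      {V | (∀ z, V z = 0) ∨ (∀ z, V z = (⟪x, z⟫ / ‖x‖ ^ 2) • x)}) := by
  obtain rfl : prox = blockSoftThreshold ν :=
    funext fun y => eq_blockSoftThreshold_of_isMinOn hν.le (hprox y)
  refine ⟨Bsubdiff_blockSoftThreshold_of_norm_lt, fun hx => ?_, fun hx => ?_⟩
  · rw [Bsubdiff_blockSoftThreshold_of_lt_norm hν.le hx]
    ext V
    simp [ContinuousLinearMap.ext_iff, blockSoftThresholdDeriv_apply]
  · rw [Bsubdiff_blockSoftThreshold_of_norm_eq hν hx]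
    ext V
    simp [ContinuousLinearMap.ext_iff, blockSoftThresholdDeriv_apply, hx, hν.ne']
end

section
/- Let f : ℝ^n → ℝ be a twice continuously differentiable convex function, g : ℝ^n → (-∞, ∞] a proper closed convex function, ν > 0, and x̄ ∈ ℝ^n. Suppose ∂_B prox_{νg} is a linear Newton approximation of prox_{νg} at z̄ := x̄ − ν∇f(x̄), i.e., ‖prox_{νg}(z̄) − prox_{νg}(z) − V(z̄ − z)‖₂ = o(‖z̄ − z‖₂) as z → z̄, uniformly over V ∈ ∂_B prox_{νg}(z). Then ∂F_ν is a linear Newton approximation of F_ν at x̄: ‖F_ν(x̄) − F_ν(y) − U(x̄ − y)‖₂ = o(‖x̄ − y‖₂) as y → x̄, uniformly over U ∈ ∂F_ν(y). -/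
open Filter Topology

/-- The proximal-gradient residual `F_ν(x) = x − prox_{νg}(x − ν ∇f(x))`,
where `prox` denotes the proximal map of `νg`. -/
noncomputable def Fnu {n : ℕ} (f : EuclideanSpace ℝ (Fin n) → ℝ)
    (prox : EuclideanSpace ℝ (Fin n) → EuclideanSpace ℝ (Fin n)) (ν : ℝ)
    (x : EuclideanSpace ℝ (Fin n)) : EuclideanSpace ℝ (Fin n) :=
  x - prox (x - ν • gradient f x)

/-- The set-valued map `∂F_ν(x) = { I − V(I − ν ∇²f(x)) : V ∈ ∂_B prox_{νg}(x − ν∇f(x)) }`. -/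
noncomputable def DFnu {n : ℕ} (f : EuclideanSpace ℝ (Fin n) → ℝ)
    (prox : EuclideanSpace ℝ (Fin n) → EuclideanSpace ℝ (Fin n)) (ν : ℝ)
    (x : EuclideanSpace ℝ (Fin n)) :
    Set (EuclideanSpace ℝ (Fin n) →L[ℝ] EuclideanSpace ℝ (Fin n)) :=
  {U | ∃ V ∈ Bsubdiff prox (x - ν • gradient f x),
    U = 1 - V * (1 - ν • fderiv ℝ (gradient f) x)}

/-!
Write `F_ν = id − prox ∘ T` with `T x = x − ν ∇f(x)`, a `C¹` map with derivative
`T'(y) = I − ν ∇²f(y)`. Linear Newton approximations compose: if `P` has one whose elements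
are uniformly bounded and `T` is `C¹`, then `P(Tx̄) − P(Ty) − V T'(y)(x̄ − y)` splits into the
error of `P` between `Ty` and `Tx̄` (of size `o(‖Tx̄ − Ty‖) = o(‖x̄ − y‖)`) plus `V` applied to
the Taylor error of `T`. The bound `‖V‖ ≤ 1` on `∂_B prox_{νg}` comes from nonexpansiveness of
the proximal map, which follows from its variational inequality.
-/

open scoped NNReal RealInnerProductSpace

section LinearNewtonApprox

variable {E F G : Type*} [NormedAddCommGroup E] [NormedSpace ℝ E]
  [NormedAddCommGroup F] [NormedSpace ℝ F] [NormedAddCommGroup G] [NormedSpace ℝ G]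

def IsLinearNewtonApprox (Φ : E → F) (A : E → Set (E →L[ℝ] F)) (x : E) : Prop :=
  ∀ ε > (0 : ℝ), ∀ᶠ y in 𝓝 x, ∀ V ∈ A y, ‖Φ x - Φ y - V (x - y)‖ ≤ ε * ‖x - y‖

theorem isLinearNewtonApprox_iff {Φ : E → F} {A : E → Set (E →L[ℝ] F)} {x : E} :
    IsLinearNewtonApprox Φ A x ↔ ∀ ε > (0 : ℝ), ∃ δ > (0 : ℝ), ∀ y, ‖y - x‖ < δ →
      ∀ V ∈ A y, ‖Φ x - Φ y - V (x - y)‖ ≤ ε * ‖x - y‖ := by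
  simp only [IsLinearNewtonApprox, Metric.eventually_nhds_iff, dist_eq_norm]

namespace IsLinearNewtonApprox

variable {Φ : E → F} {A : E → Set (E →L[ℝ] F)} {T' : E → E →L[ℝ] F} {x : E}

theorem mono {B : E → Set (E →L[ℝ] F)} (h : IsLinearNewtonApprox Φ A x)
    (hBA : ∀ y, B y ⊆ A y) : IsLinearNewtonApprox Φ B x :=
  fun ε hε => (h ε hε).mono fun _ hy V hV => hy V (hBA _ hV)

theorem id_sub {P : E → E} {A : E → Set (E →L[ℝ] E)} (h : IsLinearNewtonApprox P A x) :
    IsLinearNewtonApprox (fun y => y - P y) (fun y => {U | ∃ V ∈ A y, U = 1 - V}) x := by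
  intro ε hε
  filter_upwards [h ε hε] with y hy U ⟨V, hV, hU⟩
  have hsplit : x - P x - (y - P y) - U (x - y) = -(P x - P y - V (x - y)) := by
    subst hU
    simp only [sub_apply, one_apply_eq_self]
    abel
  rw [hsplit, norm_neg]
  exact hy V hV

theorem of_hasFDerivAt (hd : ∀ᶠ y in 𝓝 x, HasFDerivAt Φ (T' y) y) (hc : ContinuousAt T' x) :
    IsLinearNewtonApprox Φ (fun y => {T' y}) x := by
  intro ε hε
  have hstrict := hasStrictFDerivAt_iff_isLittleO.1
    (hasStrictFDerivAt_of_hasFDerivAt_of_continuousAt hd hc)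
  have hx : ∀ᶠ y in 𝓝 x, ‖Φ x - Φ y - T' x (x - y)‖ ≤ ε / 2 * ‖x - y‖ :=
    (tendsto_const_nhds.prodMk_nhds tendsto_id).eventually (hstrict.def (half_pos hε))
  have hT' : ∀ᶠ y in 𝓝 x, ‖T' x - T' y‖ ≤ ε / 2 := by
    filter_upwards [hc (Metric.closedBall_mem_nhds _ (half_pos hε))] with y hy
    rw [norm_sub_rev, ← dist_eq_norm]
    exact hy
  filter_upwards [hx, hT'] with y hxy hT'y V hV
  rw [Set.mem_singleton_iff] at hV
  subst hV
  calc ‖Φ x - Φ y - T' y (x - y)‖ = ‖(Φ x - Φ y - T' x (x - y)) + (T' x - T' y) (x - y)‖ := by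
        congr 1; rw [sub_apply]; abel
    _ ≤ ε / 2 * ‖x - y‖ + ε / 2 * ‖x - y‖ :=
        norm_add_le_of_le hxy (((T' x - T' y).le_opNorm _).trans (by gcongr))
    _ = ε * ‖x - y‖ := by ring

theorem eventually_norm_sub_le (h : IsLinearNewtonApprox Φ (fun y => {T' y}) x)
    (hc : ContinuousAt T' x) : ∀ᶠ y in 𝓝 x, ‖Φ x - Φ y‖ ≤ (‖T' x‖ + 2) * ‖x - y‖ := by
  have hT' : ∀ᶠ y in 𝓝 x, ‖T' y‖ ≤ ‖T' x‖ + 1 := by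
    filter_upwards [hc (Metric.closedBall_mem_nhds _ one_pos)] with y hy
    exact (norm_le_norm_add_norm_sub' _ (T' x)).trans (by gcongr; rwa [← dist_eq_norm])
  filter_upwards [h 1 one_pos, hT'] with y hy hT'y
  calc ‖Φ x - Φ y‖ = ‖(Φ x - Φ y - T' y (x - y)) + T' y (x - y)‖ := by rw [sub_add_cancel]
    _ ≤ 1 * ‖x - y‖ + (‖T' x‖ + 1) * ‖x - y‖ :=
        norm_add_le_of_le (hy _ rfl) (((T' y).le_opNorm _).trans (by gcongr))
    _ = (‖T' x‖ + 2) * ‖x - y‖ := by ring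

theorem continuousAt (h : IsLinearNewtonApprox Φ (fun y => {T' y}) x)
    (hc : ContinuousAt T' x) : ContinuousAt Φ x := by
  have hO : (fun y => Φ x - Φ y) =O[𝓝 x] (fun y => x - y) :=
    .of_bound _ (h.eventually_norm_sub_le hc)
  have h0 : Tendsto (fun y => Φ x - Φ y) (𝓝 x) (𝓝 0) :=
    hO.trans_tendsto (by simpa using (tendsto_const_nhds (x := x) (f := 𝓝 x)).sub tendsto_id)
  simpa [ContinuousAt] using (tendsto_const_nhds (x := Φ x)).sub h0

theorem comp {P : F → G} {A : F → Set (F →L[ℝ] G)} {L : ℝ≥0}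
    (hP : IsLinearNewtonApprox P A (Φ x)) (hA : ∀ z, ∀ V ∈ A z, ‖V‖ ≤ L)
    (hΦ : IsLinearNewtonApprox Φ (fun y => {T' y}) x) (hc : ContinuousAt T' x) :
    IsLinearNewtonApprox (P ∘ Φ) (fun y => {U | ∃ V ∈ A (Φ y), U = V.comp (T' y)}) x := by
  intro ε hε
  set K := ‖T' x‖ + 2
  have hK : 0 < K := by positivity
  set ε₁ := ε / (2 * K) with hε₁
  set ε₂ := ε / (2 * (L + 1)) with hε₂
  have hε₁K : ε₁ * K = ε / 2 := by
    rw [hε₁]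
    field_simp
  have hε₂L : L * ε₂ ≤ ε / 2 := by
    rw [hε₂, mul_div_assoc', div_le_div_iff₀ (by positivity) two_pos]
    nlinarith
  have hPΦ : ∀ᶠ y in 𝓝 x, ∀ V ∈ A (Φ y),
      ‖P (Φ x) - P (Φ y) - V (Φ x - Φ y)‖ ≤ ε₁ * ‖Φ x - Φ y‖ :=
    (hΦ.continuousAt hc).eventually (hP ε₁ (by positivity))
  filter_upwards [hPΦ, hΦ ε₂ (by positivity), hΦ.eventually_norm_sub_le hc]
    with y hPy hΦy hlip U ⟨V, hV, hU⟩
  subst hU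
  have hsplit : P (Φ x) - P (Φ y) - V.comp (T' y) (x - y)
      = (P (Φ x) - P (Φ y) - V (Φ x - Φ y)) + V (Φ x - Φ y - T' y (x - y)) := by
    simp only [ContinuousLinearMap.comp_apply, map_sub]
    abel
  calc ‖(P ∘ Φ) x - (P ∘ Φ) y - V.comp (T' y) (x - y)‖
      = ‖(P (Φ x) - P (Φ y) - V (Φ x - Φ y)) + V (Φ x - Φ y - T' y (x - y))‖ := by
        rw [Function.comp_apply, Function.comp_apply, hsplit]
    _ ≤ ε₁ * (K * ‖x - y‖) + L * (ε₂ * ‖x - y‖) :=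
        norm_add_le_of_le ((hPy V hV).trans (by gcongr))
          ((V.le_opNorm _).trans (mul_le_mul (hA _ V hV) (hΦy _ rfl) (norm_nonneg _) L.2))
    _ ≤ ε / 2 * ‖x - y‖ + ε / 2 * ‖x - y‖ := by
        rw [← mul_assoc, ← mul_assoc, hε₁K]
        gcongr
    _ = ε * ‖x - y‖ := by ring

end IsLinearNewtonApprox

end LinearNewtonApprox

theorem norm_le_of_mem_Bsubdiff {n : ℕ}
    {F : EuclideanSpace ℝ (Fin n) → EuclideanSpace ℝ (Fin n)} {K : ℝ≥0}
    (hF : LipschitzWith K F) {z : EuclideanSpace ℝ (Fin n)}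
    {V : EuclideanSpace ℝ (Fin n) →L[ℝ] EuclideanSpace ℝ (Fin n)}
    (hV : V ∈ Bsubdiff F z) : ‖V‖ ≤ K := by
  obtain ⟨u, -, hdiff, hlim⟩ := hV
  exact le_of_tendsto' hlim.norm fun k => (hdiff k).hasFDerivAt.le_of_lipschitz hF

theorem ContDiff.gradient {H : Type*} [NormedAddCommGroup H] [InnerProductSpace ℝ H]
    [CompleteSpace H] {f : H → ℝ} {m n : WithTop ℕ∞} (hf : ContDiff ℝ n f) (hmn : m + 1 ≤ n) :
    ContDiff ℝ m (gradient f) :=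
  (InnerProductSpace.toDual ℝ H).symm.contDiff.comp (hf.fderiv_right hmn)

section Prox

variable {H : Type*} [NormedAddCommGroup H] {g : H → EReal} {ν : ℝ} {prox : H → H}

theorem apply_prox_ne_top (hν : 0 < ν) (hg_nebot : ∀ x, g x ≠ ⊥) (hg_proper : ∃ x, g x ≠ ⊤)
    (hprox : ∀ x, IsMinOn
      (fun z => (ν : EReal) * g z + ((‖z - x‖ ^ 2 / 2 : ℝ) : EReal)) Set.univ (prox x))
    (x : H) : g (prox x) ≠ ⊤ := by
  obtain ⟨z, hz⟩ := hg_proper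
  intro htop
  have hmin := isMinOn_iff.mp (hprox x) z (Set.mem_univ _)
  rw [htop, EReal.mul_top_of_pos (by exact_mod_cast hν), EReal.top_add_coe, top_le_iff,
    ← (g z).coe_toReal hz (hg_nebot z)] at hmin
  exact EReal.coe_ne_top _ (by exact_mod_cast hmin)

variable [InnerProductSpace ℝ H]

theorem prox_variational_ineq (hν : 0 < ν) (hg_nebot : ∀ x, g x ≠ ⊥)
    (hg_conv : ∀ x y : H, ∀ a b : ℝ, 0 ≤ a → 0 ≤ b → a + b = 1 →
      g (a • x + b • y) ≤ (a : EReal) * g x + (b : EReal) * g y)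
    (hprox : ∀ x, IsMinOn
      (fun z => (ν : EReal) * g z + ((‖z - x‖ ^ 2 / 2 : ℝ) : EReal)) Set.univ (prox x))
    (x q : H) (a b : ℝ) (ha : g (prox x) = a) (hb : g q = b) :
    0 ≤ ν * (b - a) + ⟪prox x - x, q - prox x⟫ := by
  set p := prox x
  set c := ν * (b - a) + ⟪p - x, q - p⟫
  -- compare the prox objective at `p` with its value at `(1 - t) • p + t • q`, then let `t → 0⁺`
  have hstep : ∀ t ∈ Set.Ioc (0 : ℝ) 1, 0 ≤ c + t * (‖q - p‖ ^ 2 / 2) := by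
    rintro t ⟨ht0, ht1⟩
    set z := (1 - t) • p + t • q
    have hgz : g z ≤ (((1 - t) * a + t * b : ℝ) : EReal) := by
      refine (hg_conv p q (1 - t) t (by linarith) ht0.le (by ring)).trans (le_of_eq ?_)
      rw [ha, hb]
      norm_cast
    obtain ⟨r, hr⟩ : ∃ r : ℝ, g z = r :=
      ⟨_, ((g z).coe_toReal (ne_top_of_le_ne_top (EReal.coe_ne_top _) hgz) (hg_nebot z)).symm⟩
    rw [hr, EReal.coe_le_coe_iff] at hgz
    have hmin := isMinOn_iff.mp (hprox x) z (Set.mem_univ _)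
    rw [ha, hr] at hmin
    have hmin' : ν * a + ‖p - x‖ ^ 2 / 2 ≤ ν * r + ‖z - x‖ ^ 2 / 2 := by exact_mod_cast hmin
    have hz : ‖z - x‖ ^ 2 = ‖p - x‖ ^ 2 + 2 * (t * ⟪p - x, q - p⟫) + t ^ 2 * ‖q - p‖ ^ 2 := by
      rw [show z - x = (p - x) + t • (q - p) by module, norm_add_sq_real, real_inner_smul_right,
        norm_smul, Real.norm_eq_abs, mul_pow, sq_abs]
    have hνr := mul_le_mul_of_nonneg_left hgz hν.le
    nlinarith
  have hlim : Tendsto (fun t : ℝ => c + t * (‖q - p‖ ^ 2 / 2)) (𝓝 0)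
      (𝓝 (c + 0 * (‖q - p‖ ^ 2 / 2))) :=
    tendsto_const_nhds.add (tendsto_id.mul tendsto_const_nhds)
  rw [zero_mul, add_zero] at hlim
  exact ge_of_tendsto (hlim.mono_left nhdsWithin_le_nhds)
    (by filter_upwards [Ioc_mem_nhdsGT one_pos] with t ht using hstep t ht)

theorem prox_lipschitzWith_one (hν : 0 < ν) (hg_nebot : ∀ x, g x ≠ ⊥)
    (hg_proper : ∃ x, g x ≠ ⊤)
    (hg_conv : ∀ x y : H, ∀ a b : ℝ, 0 ≤ a → 0 ≤ b → a + b = 1 →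
      g (a • x + b • y) ≤ (a : EReal) * g x + (b : EReal) * g y)
    (hprox : ∀ x, IsMinOn
      (fun z => (ν : EReal) * g z + ((‖z - x‖ ^ 2 / 2 : ℝ) : EReal)) Set.univ (prox x)) :
    LipschitzWith 1 prox := by
  refine LipschitzWith.of_dist_le_mul fun x x' => ?_
  have hfin := apply_prox_ne_top hν hg_nebot hg_proper hprox
  have ha := (g (prox x)).coe_toReal (hfin x) (hg_nebot _)
  have hb := (g (prox x')).coe_toReal (hfin x') (hg_nebot _)
  have h₁ := prox_variational_ineq hν hg_nebot hg_conv hprox x _ _ _ ha.symm hb.symm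
  have h₂ := prox_variational_ineq hν hg_nebot hg_conv hprox x' _ _ _ hb.symm ha.symm
  set p := prox x
  set q := prox x'
  -- adding the two variational inequalities gives firm nonexpansiveness
  have hfirm : ‖p - q‖ ^ 2 ≤ ⟪x - x', p - q⟫ := by
    have hsum : ⟪p - x, q - p⟫ + ⟪q - x', p - q⟫ = ⟪x - x', p - q⟫ - ‖p - q‖ ^ 2 := by
      rw [← real_inner_self_eq_norm_sq]
      simp only [inner_sub_left, inner_sub_right, real_inner_comm]
      ring
    linarith
  have hcs := (hfirm.trans (real_inner_le_norm _ _))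
  rw [NNReal.coe_one, one_mul, dist_eq_norm, dist_eq_norm]
  nlinarith [norm_nonneg (p - q), norm_nonneg (x - x')]

end Prox

theorem statement8_general {n : ℕ} (f : EuclideanSpace ℝ (Fin n) → ℝ)
    (g : EuclideanSpace ℝ (Fin n) → EReal) (ν : ℝ) (hν : 0 < ν)
    (hf : ContDiff ℝ 2 f)
    (hg_nebot : ∀ x, g x ≠ ⊥) (hg_proper : ∃ x, g x ≠ ⊤)
    (hg_conv : ∀ x y : EuclideanSpace ℝ (Fin n), ∀ a b : ℝ, 0 ≤ a → 0 ≤ b → a + b = 1 →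
      g (a • x + b • y) ≤ (a : EReal) * g x + (b : EReal) * g y)
    (prox : EuclideanSpace ℝ (Fin n) → EuclideanSpace ℝ (Fin n))
    (hprox : ∀ x, IsMinOn
      (fun z => (ν : EReal) * g z + ((‖z - x‖ ^ 2 / 2 : ℝ) : EReal)) Set.univ (prox x))
    (xbar : EuclideanSpace ℝ (Fin n))
    (hLNA : ∀ ε > (0 : ℝ), ∃ δ > (0 : ℝ), ∀ z : EuclideanSpace ℝ (Fin n),
      ‖z - (xbar - ν • gradient f xbar)‖ < δ → ∀ V ∈ Bsubdiff prox z,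
        ‖prox (xbar - ν • gradient f xbar) - prox z - V ((xbar - ν • gradient f xbar) - z)‖
          ≤ ε * ‖(xbar - ν • gradient f xbar) - z‖) :
    ∀ ε > (0 : ℝ), ∃ δ > (0 : ℝ), ∀ y : EuclideanSpace ℝ (Fin n), ‖y - xbar‖ < δ →
      ∀ U ∈ DFnu f prox ν y,
        ‖Fnu f prox ν xbar - Fnu f prox ν y - U (xbar - y)‖ ≤ ε * ‖xbar - y‖ := by
  have hG : ContDiff ℝ 1 (gradient f) := hf.gradient (by norm_num)
  set T : EuclideanSpace ℝ (Fin n) → EuclideanSpace ℝ (Fin n) := fun x => x - ν • gradient f x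
  have hT'cont : ContinuousAt (fun y => 1 - ν • fderiv ℝ (gradient f) y) xbar :=
    (continuous_const.sub ((hG.continuous_fderiv one_ne_zero).const_smul ν)).continuousAt
  have hT : IsLinearNewtonApprox T (fun y => {1 - ν • fderiv ℝ (gradient f) y}) xbar :=
    .of_hasFDerivAt (.of_forall fun y =>
      (hasFDerivAt_id y).sub ((hG.differentiable one_ne_zero y).hasFDerivAt.const_smul ν)) hT'cont
  have hVnorm : ∀ z, ∀ V ∈ Bsubdiff prox z, ‖V‖ ≤ (1 : ℝ≥0) := fun _ _ hV =>
    norm_le_of_mem_Bsubdiff (prox_lipschitzWith_one hν hg_nebot hg_proper hg_conv hprox) hV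
  have hprox_LNA : IsLinearNewtonApprox prox (Bsubdiff prox) (T xbar) :=
    isLinearNewtonApprox_iff.2 hLNA
  refine isLinearNewtonApprox_iff.1 ((hprox_LNA.comp hVnorm hT hT'cont).id_sub.mono ?_)
  rintro y U ⟨V, hV, rfl⟩
  exact ⟨_, ⟨V, hV, rfl⟩, rfl⟩

/-- Proposition 3.2, first part. If `∂_B prox_{νg}` is a linear Newton
approximation of `prox_{νg}` at `z̄ = x̄ − ν∇f(x̄)`, then `∂F_ν` is a linear Newton
approximation of `F_ν` at `x̄`. -/
theorem statement8 {n : ℕ} (f : EuclideanSpace ℝ (Fin n) → ℝ)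
    (g : EuclideanSpace ℝ (Fin n) → EReal) (ν : ℝ) (hν : 0 < ν)
    (hf : ContDiff ℝ 2 f) (hf_conv : ConvexOn ℝ Set.univ f)
    (hg_nebot : ∀ x, g x ≠ ⊥) (hg_proper : ∃ x, g x ≠ ⊤)
    (hg_closed : LowerSemicontinuous g)
    (hg_conv : ∀ x y : EuclideanSpace ℝ (Fin n), ∀ a b : ℝ, 0 ≤ a → 0 ≤ b → a + b = 1 →
      g (a • x + b • y) ≤ (a : EReal) * g x + (b : EReal) * g y)
    (prox : EuclideanSpace ℝ (Fin n) → EuclideanSpace ℝ (Fin n))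
    (hprox : ∀ x, IsMinOn
      (fun z => (ν : EReal) * g z + ((‖z - x‖ ^ 2 / 2 : ℝ) : EReal)) Set.univ (prox x))
    (xbar : EuclideanSpace ℝ (Fin n))
    (hLNA : ∀ ε > (0 : ℝ), ∃ δ > (0 : ℝ), ∀ z : EuclideanSpace ℝ (Fin n),
      ‖z - (xbar - ν • gradient f xbar)‖ < δ → ∀ V ∈ Bsubdiff prox z,
        ‖prox (xbar - ν • gradient f xbar) - prox z - V ((xbar - ν • gradient f xbar) - z)‖
          ≤ ε * ‖(xbar - ν • gradient f xbar) - z‖) :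
    ∀ ε > (0 : ℝ), ∃ δ > (0 : ℝ), ∀ y : EuclideanSpace ℝ (Fin n), ‖y - xbar‖ < δ →
      ∀ U ∈ DFnu f prox ν y,
        ‖Fnu f prox ν xbar - Fnu f prox ν y - U (xbar - y)‖ ≤ ε * ‖xbar - y‖ :=
  statement8_general f g ν hν hf hg_nebot hg_proper hg_conv prox hprox xbar hLNA
end

section
/- Let g : ℝ^n → (-∞, ∞] be a proper closed convex function and ν > 0. Then for every x ∈ ℝ^n, every matrix V ∈ ∂_B prox_{νg}(x) is symmetric, positive semidefinite, and satisfies ‖V‖ ≤ 1 in operator norm. -/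
open Filter Topology RealInnerProductSpace

/-!
On its domain `{g < ⊤}`, `ν g` is a real convex function `φ`, and `prox` minimizes
`φ z + ‖z - w‖² / 2` there. The variational inequality of this problem makes `prox` firmly
nonexpansive, `‖prox v - prox u‖² ≤ ⟪prox v - prox u, v - u⟫`, and this passes to every
derivative `D` of `prox`: `‖D h‖² ≤ ⟪D h, h⟫`, whence `⟪h, D h⟫ ≥ 0` and `‖D‖ ≤ 1`.
The Moreau envelope `w ↦ φ (prox w) + ‖prox w - w‖² / 2` is differentiable with gradient
`w - prox w`, so wherever `prox` is differentiable, `I - D` is a second derivative and hence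
symmetric. All three properties are closed conditions on `D`, so they hold on `∂_B prox`.
-/

variable {E : Type*} [NormedAddCommGroup E]

/-- `prox` is the proximal map of `φ` plus the indicator function of `s`. -/
def IsProxMap (φ : E → ℝ) (s : Set E) (prox : E → E) : Prop :=
  ∀ w, prox w ∈ s ∧ IsMinOn (fun z => φ z + ‖z - w‖ ^ 2 / 2) s (prox w)

theorem convexOn_toReal [Module ℝ E] {g : E → EReal} (hg_nebot : ∀ x, g x ≠ ⊥)
    (hg_conv : ∀ x y : E, ∀ a b : ℝ, 0 ≤ a → 0 ≤ b → a + b = 1 →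
      g (a • x + b • y) ≤ (a : EReal) * g x + (b : EReal) * g y) :
    ConvexOn ℝ {z | g z ≠ ⊤} fun z => (g z).toReal := by
  have hcomb : ∀ x, g x ≠ ⊤ → ∀ y, g y ≠ ⊤ → ∀ a b : ℝ, 0 ≤ a → 0 ≤ b → a + b = 1 →
      g (a • x + b • y) ≤ ((a * (g x).toReal + b * (g y).toReal : ℝ) : EReal) := by
    intro x hx y hy a b ha hb hab
    have h := hg_conv x y a b ha hb hab
    lift g x to ℝ using ⟨hx, hg_nebot x⟩ with rx
    lift g y to ℝ using ⟨hy, hg_nebot y⟩ with ry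
    exact_mod_cast h
  refine ⟨fun x hx y hy a b ha hb hab => ?_, fun x hx y hy a b ha hb hab => ?_⟩
  · exact ne_top_of_le_ne_top (EReal.coe_ne_top _) (hcomb x hx y hy a b ha hb hab)
  · exact (EReal.toReal_le_toReal (hcomb x hx y hy a b ha hb hab) (hg_nebot _)
      (EReal.coe_ne_top _)).trans_eq (EReal.toReal_coe _)

theorem isProxMap_toReal {g : E → EReal} (hg_nebot : ∀ x, g x ≠ ⊥) (hg_proper : ∃ x, g x ≠ ⊤)
    {ν : ℝ} (hν : 0 < ν) {prox : E → E}
    (hprox : ∀ w, IsMinOn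
      (fun z => (ν : EReal) * g z + ((‖z - w‖ ^ 2 / 2 : ℝ) : EReal)) Set.univ (prox w)) :
    IsProxMap (fun z => ν * (g z).toReal) {z | g z ≠ ⊤} prox := by
  have hcoe : ∀ z, g z ≠ ⊤ → ∀ r : ℝ,
      (ν : EReal) * g z + r = ((ν * (g z).toReal + r : ℝ) : EReal) := by
    intro z hz r
    lift g z to ℝ using ⟨hz, hg_nebot z⟩ with rz
    norm_cast
  intro w
  have hfin : g (prox w) ≠ ⊤ := by
    intro htop
    obtain ⟨x₀, hx₀⟩ := hg_proper
    have h := hprox w (Set.mem_univ x₀)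
    simp only [Set.mem_ofPred_eq] at h
    rw [htop, EReal.coe_mul_top_of_pos hν, EReal.top_add_coe, hcoe x₀ hx₀] at h
    exact EReal.coe_ne_top _ (top_le_iff.mp h)
  refine ⟨hfin, fun z (hz : g z ≠ ⊤) => ?_⟩
  have h := hprox w (Set.mem_univ z)
  simp only [Set.mem_ofPred_eq] at h
  rwa [hcoe z hz, hcoe _ hfin, EReal.coe_le_coe_iff] at h

section InnerProductSpace

variable [InnerProductSpace ℝ E]

def FirmlyNonexpansive (F : E → E) : Prop :=
  ∀ u v, ‖F v - F u‖ ^ 2 ≤ ⟪F v - F u, v - u⟫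

namespace FirmlyNonexpansive

variable {F : E → E}

theorem inner_nonneg (hF : FirmlyNonexpansive F) (u v : E) : 0 ≤ ⟪F v - F u, v - u⟫ :=
  (sq_nonneg _).trans (hF u v)

theorem norm_sub_le (hF : FirmlyNonexpansive F) (u v : E) : ‖F v - F u‖ ≤ ‖v - u‖ := by
  have h := (hF u v).trans (real_inner_le_norm _ _)
  nlinarith [norm_nonneg (F v - F u), norm_nonneg (v - u)]

theorem lipschitzWith (hF : FirmlyNonexpansive F) : LipschitzWith 1 F :=
  .of_dist_le_mul fun v u => by
    simpa only [dist_eq_norm, NNReal.coe_one, one_mul] using hF.norm_sub_le u v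

theorem inner_le_norm_sq (hF : FirmlyNonexpansive F) (u v : E) :
    ⟪F v - F u, v - u⟫ ≤ ‖v - u‖ ^ 2 :=
  calc ⟪F v - F u, v - u⟫ ≤ ‖F v - F u‖ * ‖v - u‖ := real_inner_le_norm _ _
    _ ≤ ‖v - u‖ * ‖v - u‖ := by gcongr; exact hF.norm_sub_le u v
    _ = ‖v - u‖ ^ 2 := (sq _).symm

theorem firmlyNonexpansive_fderiv (hF : FirmlyNonexpansive F) {u : E}
    (hu : DifferentiableAt ℝ F u) :
    FirmlyNonexpansive (fderiv ℝ F u) := by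
  set D := fderiv ℝ F u
  suffices key : ∀ h, ‖D h‖ ^ 2 ≤ ⟪D h, h⟫ by
    intro a b
    rw [← map_sub]
    exact key (b - a)
  intro h
  have hslope : Tendsto (fun t : ℝ => t⁻¹ • (F (u + t • h) - F u)) (𝓝[≠] 0) (𝓝 (D h)) :=
    (hu.hasFDerivAt.hasLineDerivAt h).tendsto_slope_zero
  refine le_of_tendsto_of_tendsto (hslope.norm.pow 2) (hslope.inner tendsto_const_nhds) ?_
  filter_upwards [self_mem_nhdsWithin] with t (ht : t ≠ 0)
  have hFt := hF u (u + t • h)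
  rw [add_sub_cancel_left, real_inner_smul_right] at hFt
  rw [norm_smul, mul_pow, real_inner_smul_left, Real.norm_eq_abs, sq_abs]
  calc t⁻¹ ^ 2 * ‖F (u + t • h) - F u‖ ^ 2
      ≤ t⁻¹ ^ 2 * (t * ⟪F (u + t • h) - F u, h⟫) := by gcongr
    _ = t⁻¹ * ⟪F (u + t • h) - F u, h⟫ := by field_simp

end FirmlyNonexpansive

theorem isClosed_setOf_firmlyNonexpansive :
    IsClosed {T : E →L[ℝ] E | FirmlyNonexpansive T} := by
  simp only [FirmlyNonexpansive, Set.ofPred_forall]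
  exact isClosed_iInter fun u => isClosed_iInter fun v => isClosed_le (by fun_prop) (by fun_prop)

theorem isClosed_setOf_inner_comm :
    IsClosed {T : E →L[ℝ] E | ∀ a b, ⟪T a, b⟫ = ⟪a, T b⟫} := by
  simp only [Set.ofPred_forall]
  exact isClosed_iInter fun a => isClosed_iInter fun b => isClosed_eq (by fun_prop) (by fun_prop)

namespace IsProxMap

variable {φ : E → ℝ} {s : Set E} {prox : E → E}

theorem inner_le (hφ : ConvexOn ℝ s φ) (hp : IsProxMap φ s prox) (u : E) {z : E}
    (hz : z ∈ s) : ⟪u - prox u, z - prox u⟫ ≤ φ z - φ (prox u) := by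
  obtain ⟨hps, hmin⟩ := hp u
  set p := prox u
  set d := z - p
  have hsmall : ∀ t ∈ Set.Ioc (0 : ℝ) 1, ⟪u - p, d⟫ ≤ φ z - φ p + t * (‖d‖ ^ 2 / 2) := by
    rintro t ⟨ht0, ht1⟩
    have hseg : (1 - t) • p + t • z = p + t • d := by
      simp only [d, sub_smul, one_smul, smul_sub]; abel
    have hconv := hφ.2 hps hz (by linarith : 0 ≤ 1 - t) ht0.le (by ring)
    rw [hseg, smul_eq_mul, smul_eq_mul] at hconv
    have hquad := hmin (hφ.1.add_smul_sub_mem hps hz ⟨ht0.le, ht1⟩)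
    simp only [Set.mem_ofPred_eq] at hquad
    rw [add_sub_right_comm, norm_add_sq_real, real_inner_smul_right, norm_smul,
      Real.norm_eq_abs, mul_pow, sq_abs] at hquad
    have hinner : ⟪p - u, d⟫ = -⟪u - p, d⟫ := by rw [← inner_neg_left, neg_sub]
    have : t * ⟪u - p, d⟫ ≤ t * (φ z - φ p + t * (‖d‖ ^ 2 / 2)) := by nlinarith
    exact le_of_mul_le_mul_left this ht0
  have hlim : Tendsto (fun t : ℝ => φ z - φ p + t * (‖d‖ ^ 2 / 2)) (𝓝[>] 0) (𝓝 (φ z - φ p)) :=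
    ((Continuous.tendsto' (by fun_prop) 0 _ (by simp))).mono_left nhdsWithin_le_nhds
  exact ge_of_tendsto hlim (eventually_of_mem (Ioc_mem_nhdsGT zero_lt_one) hsmall)

theorem firmlyNonexpansive (hφ : ConvexOn ℝ s φ) (hp : IsProxMap φ s prox) :
    FirmlyNonexpansive prox := by
  intro u v
  have hu := hp.inner_le hφ u (hp v).1
  have hv := hp.inner_le hφ v (hp u).1
  have hsum : ⟪u - prox u, prox v - prox u⟫ + ⟪v - prox v, prox u - prox v⟫ =
      ‖prox v - prox u‖ ^ 2 - ⟪prox v - prox u, v - u⟫ := by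
    rw [← neg_sub (prox v) (prox u), inner_neg_right, ← sub_eq_add_neg, ← inner_sub_left,
      show u - prox u - (v - prox v) = prox v - prox u - (v - u) by abel, inner_sub_left,
      real_inner_self_eq_norm_sq, real_inner_comm]
  linarith

theorem envelope_le (hp : IsProxMap φ s prox) (u v : E) :
    φ (prox v) + ‖prox v - v‖ ^ 2 / 2 ≤
      φ (prox u) + ‖prox u - u‖ ^ 2 / 2 + ⟪u - prox u, v - u⟫ + ‖v - u‖ ^ 2 / 2 := by
  have h := (hp v).2 (hp u).1
  have hexp : ‖prox u - v‖ ^ 2 = ‖prox u - u‖ ^ 2 + 2 * ⟪u - prox u, v - u⟫ + ‖v - u‖ ^ 2 := by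
    rw [← sub_sub_sub_cancel_right (prox u) v u, norm_sub_sq_real, ← neg_sub u (prox u),
      inner_neg_left]
    ring
  simp only [Set.mem_ofPred_eq] at h
  linarith

theorem hasFDerivAt_envelope (hφ : ConvexOn ℝ s φ) (hp : IsProxMap φ s prox) (u : E) :
    HasFDerivAt (fun w => φ (prox w) + ‖prox w - w‖ ^ 2 / 2) (innerSL ℝ (u - prox u)) u := by
  set e := fun w => φ (prox w) + ‖prox w - w‖ ^ 2 / 2
  have hbound : ∀ v, |e v - e u - ⟪u - prox u, v - u⟫| ≤ ‖v - u‖ ^ 2 / 2 := by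
    intro v
    have hup := hp.envelope_le u v
    have hlow := hp.envelope_le v u
    have hfirm := (hp.firmlyNonexpansive hφ).inner_le_norm_sq u v
    have hsplit : ⟪v - prox v, u - v⟫ + ⟪u - prox u, v - u⟫ =
        ⟪prox v - prox u, v - u⟫ - ‖v - u‖ ^ 2 := by
      rw [← neg_sub v u, inner_neg_right, neg_add_eq_sub, ← inner_sub_left,
        show u - prox u - (v - prox v) = prox v - prox u - (v - u) by abel, inner_sub_left,
        real_inner_self_eq_norm_sq]
    rw [norm_sub_rev u v] at hlow
    rw [abs_le]
    constructor <;> simp only [e] <;> linarith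
  rw [hasFDerivAt_iff_isLittleO_nhds_zero]
  refine (Asymptotics.IsBigO.of_norm_le (g := fun h => ‖h‖ ^ 2) fun h => ?_).trans_isLittleO
    (Asymptotics.isLittleO_norm_pow_id one_lt_two)
  have hh := hbound (u + h)
  rw [add_sub_cancel_left] at hh
  rw [innerSL_apply_apply, Real.norm_eq_abs]
  linarith [sq_nonneg ‖h‖]

theorem inner_fderiv_comm (hφ : ConvexOn ℝ s φ) (hp : IsProxMap φ s prox) {u : E}
    (hu : DifferentiableAt ℝ prox u) (a b : E) :
    ⟪fderiv ℝ prox u a, b⟫ = ⟪a, fderiv ℝ prox u b⟫ := by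
  have hgrad : HasFDerivAt (fun y => innerSL ℝ (y - prox y))
      ((innerSL ℝ).comp (ContinuousLinearMap.id ℝ E - fderiv ℝ prox u)) u :=
    (innerSL ℝ).hasFDerivAt.comp u ((hasFDerivAt_id u).sub hu.hasFDerivAt)
  have hsymm := second_derivative_symmetric (hp.hasFDerivAt_envelope hφ) hgrad a b
  simp only [ContinuousLinearMap.comp_apply, sub_apply,
    ContinuousLinearMap.id_apply, innerSL_apply_apply, inner_sub_left] at hsymm
  rw [real_inner_comm a b, real_inner_comm a] at hsymm
  linarith

end IsProxMap

end InnerProductSpace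

theorem statement11_general {n : ℕ} (g : EuclideanSpace ℝ (Fin n) → EReal)
    (hg_nebot : ∀ x, g x ≠ ⊥) (hg_proper : ∃ x, g x ≠ ⊤)
    (hg_conv : ∀ x y : EuclideanSpace ℝ (Fin n), ∀ a b : ℝ, 0 ≤ a → 0 ≤ b → a + b = 1 →
      g (a • x + b • y) ≤ (a : EReal) * g x + (b : EReal) * g y)
    (ν : ℝ) (hν : 0 < ν)
    (prox : EuclideanSpace ℝ (Fin n) → EuclideanSpace ℝ (Fin n))
    (hprox : ∀ w, IsMinOn
      (fun z => (ν : EReal) * g z + ((‖z - w‖ ^ 2 / 2 : ℝ) : EReal)) Set.univ (prox w))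
    (x : EuclideanSpace ℝ (Fin n))
    (V : EuclideanSpace ℝ (Fin n) →L[ℝ] EuclideanSpace ℝ (Fin n))
    (hV : V ∈ Bsubdiff prox x) :
    (∀ a b : EuclideanSpace ℝ (Fin n), ⟪V a, b⟫ = ⟪a, V b⟫) ∧
    (∀ a : EuclideanSpace ℝ (Fin n), 0 ≤ ⟪a, V a⟫) ∧ ‖V‖ ≤ 1 := by
  obtain ⟨u, -, hdiff, hlim⟩ := hV
  have hφ : ConvexOn ℝ {z | g z ≠ ⊤} fun z => ν * (g z).toReal :=
    (convexOn_toReal hg_nebot hg_conv).smul hν.le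
  have hp := isProxMap_toReal hg_nebot hg_proper hν hprox
  have hsymm : ∀ a b, ⟪V a, b⟫ = ⟪a, V b⟫ :=
    isClosed_setOf_inner_comm.mem_of_tendsto hlim
      (.of_forall fun k => hp.inner_fderiv_comm hφ (hdiff k))
  have hfirm : FirmlyNonexpansive V :=
    isClosed_setOf_firmlyNonexpansive.mem_of_tendsto hlim
      (.of_forall fun k => (hp.firmlyNonexpansive hφ).firmlyNonexpansive_fderiv (hdiff k))
  refine ⟨hsymm, fun a => ?_, V.opNorm_le_of_lipschitz hfirm.lipschitzWith⟩
  simpa [real_inner_comm] using hfirm.inner_nonneg 0 a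

/-- Theorem A.2. For a proper closed convex `g` and `ν > 0`, every
`V ∈ ∂_B prox_{νg}(x)` is symmetric, positive semidefinite, and has operator norm at
most `1`. -/
theorem statement11 {n : ℕ} (g : EuclideanSpace ℝ (Fin n) → EReal)
    (hg_nebot : ∀ x, g x ≠ ⊥) (hg_proper : ∃ x, g x ≠ ⊤)
    (hg_closed : LowerSemicontinuous g)
    (hg_conv : ∀ x y : EuclideanSpace ℝ (Fin n), ∀ a b : ℝ, 0 ≤ a → 0 ≤ b → a + b = 1 →
      g (a • x + b • y) ≤ (a : EReal) * g x + (b : EReal) * g y)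
    (ν : ℝ) (hν : 0 < ν)
    (prox : EuclideanSpace ℝ (Fin n) → EuclideanSpace ℝ (Fin n))
    (hprox : ∀ w, IsMinOn
      (fun z => (ν : EReal) * g z + ((‖z - w‖ ^ 2 / 2 : ℝ) : EReal)) Set.univ (prox w))
    (x : EuclideanSpace ℝ (Fin n))
    (V : EuclideanSpace ℝ (Fin n) →L[ℝ] EuclideanSpace ℝ (Fin n))
    (hV : V ∈ Bsubdiff prox x) :
    (∀ a b : EuclideanSpace ℝ (Fin n), ⟪V a, b⟫ = ⟪a, V b⟫) ∧
    (∀ a : EuclideanSpace ℝ (Fin n), 0 ≤ ⟪a, V a⟫) ∧ ‖V‖ ≤ 1 :=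
  statement11_general g hg_nebot hg_proper hg_conv ν hν prox hprox x V hV
end

section
/- Let A ∈ ℝ^{n×n} be a symmetric positive semidefinite matrix and B ∈ ℝ^{n×n} a symmetric matrix. Then every (complex) eigenvalue λ of the product AB is real and satisfies min{ ‖A‖ λ_min(B), 0 } ≤ λ ≤ max{ ‖A‖ λ_max(B), 0 }, where ‖A‖ is the operator norm of A and λ_min(B), λ_max(B) are the minimum and maximum eigenvalues of B. -/
/-!
Write `S = √A`. The nonzero spectra of `AB = S (SB)` and of the symmetric matrix `SBS` agree, so
every nonzero eigenvalue of `AB` is real. In the Loewner order, conjugating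
`λ_min(B) • 1 ≤ B ≤ λ_max(B) • 1` by `S` gives `λ_min(B) • A ≤ SBS ≤ λ_max(B) • A`, and
`0 ≤ A ≤ ‖A‖ • 1` turns these into scalar bounds on `SBS`, hence on its spectrum.
-/

open scoped MatrixOrder ComplexOrder

section OrderedAlgebra

variable {R : Type*} [Ring R] [PartialOrder R] [Algebra ℝ R]
  [ZeroLEOneClass R] [PosSMulMono ℝ R] [SMulPosMono ℝ R] {X : R} {a : ℝ}

lemma smul_le_algebraMap_max (h0 : 0 ≤ X) (hX : X ≤ algebraMap ℝ R a) (c : ℝ) :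
    c • X ≤ algebraMap ℝ R (max (a * c) 0) := by
  rcases le_total 0 c with hc | hc
  · calc c • X ≤ c • algebraMap ℝ R a := smul_le_smul_of_nonneg_left hX hc
      _ = algebraMap ℝ R (a * c) := by rw [Algebra.smul_def, ← map_mul, mul_comm]
      _ ≤ _ := algebraMap_mono R (le_max_left _ _)
  · calc c • X ≤ 0 := smul_nonpos_of_nonpos_of_nonneg hc h0
      _ ≤ _ := algebraMap_nonneg R (le_max_right _ _)

lemma algebraMap_min_le_smul [IsOrderedAddMonoid R] (h0 : 0 ≤ X) (hX : X ≤ algebraMap ℝ R a)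
    (c : ℝ) : algebraMap ℝ R (min (a * c) 0) ≤ c • X := by
  have := neg_le_neg (smul_le_algebraMap_max h0 hX (-c))
  rwa [neg_smul, neg_neg, ← map_neg, mul_neg, ← neg_zero, max_neg_neg, neg_neg] at this

end OrderedAlgebra

namespace Matrix.IsHermitian

variable {n : Type*} [Fintype n] [DecidableEq n] {𝕜 : Type*} [RCLike 𝕜] {A B : Matrix n n 𝕜}

lemma le_algebraMap_norm_toEuclideanCLM (hA : A.IsHermitian) :
    A ≤ algebraMap ℝ _ ‖toEuclideanCLM (𝕜 := 𝕜) A‖ := by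
  refine (le_algebraMap_iff_spectrum_le hA.isSelfAdjoint).mpr fun x hx => ?_
  rw [← spectrum.algebraMap_mem_iff 𝕜,
    ← AlgEquiv.spectrum_eq (toEuclideanCLM (𝕜 := 𝕜) (n := n)).toAlgEquiv] at hx
  have hx' := Metric.mem_closedBall.mp (spectrum.subset_closedBall_norm_mul _ hx)
  rw [dist_zero_right, RCLike.algebraMap_eq_ofReal, RCLike.norm_ofReal] at hx'
  -- `‖1‖ ≤ 1` rather than `= 1`: the space is trivial when `n` is empty
  calc x ≤ |x| := le_abs_self x
    _ ≤ _ * ‖(1 : EuclideanSpace 𝕜 n →L[𝕜] EuclideanSpace 𝕜 n)‖ := hx'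
    _ ≤ _ := mul_le_of_le_one_right (norm_nonneg _) ContinuousLinearMap.norm_id_le

lemma algebraMap_iInf_eigenvalues_le (hA : A.IsHermitian) :
    algebraMap ℝ _ (⨅ i, hA.eigenvalues i) ≤ A := by
  refine (algebraMap_le_iff_le_spectrum hA.isSelfAdjoint).mpr fun x hx => ?_
  obtain ⟨i, rfl⟩ := hA.spectrum_real_eq_range_eigenvalues ▸ hx
  exact ciInf_le (Set.finite_range _).bddBelow i

lemma le_algebraMap_iSup_eigenvalues (hA : A.IsHermitian) :
    A ≤ algebraMap ℝ _ (⨆ i, hA.eigenvalues i) := by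
  refine (le_algebraMap_iff_spectrum_le hA.isSelfAdjoint).mpr fun x hx => ?_
  obtain ⟨i, rfl⟩ := hA.spectrum_real_eq_range_eigenvalues ▸ hx
  exact le_ciSup (Set.finite_range _).bddAbove i

lemma sqrt_mul_mul_sqrt (hB : B.IsHermitian) (A : Matrix n n 𝕜) :
    (CFC.sqrt A * B * CFC.sqrt A).IsHermitian := by
  simpa only [(CFC.sqrt_nonneg A).isSelfAdjoint.star_eq] using
    (hB.isSelfAdjoint.conjugate' (CFC.sqrt A)).isHermitian

lemma spectrum_map_ofReal {M : Matrix n n ℝ} (hM : M.IsHermitian) :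
    spectrum ℂ (M.map Complex.ofReal) = Complex.ofReal '' spectrum ℝ M := by
  ext z
  rw [hM.spectrum_real_eq_range_eigenvalues, mem_spectrum_iff_isRoot_charpoly]
  change (M.map Complex.ofRealHom).charpoly.IsRoot z ↔ _
  rw [charpoly_map, hM.charpoly_eq]
  simp [Polynomial.map_prod, Polynomial.eval_prod, Finset.prod_eq_zero_iff, sub_eq_zero,
    eq_comm (a := z)]

end Matrix.IsHermitian

lemma Matrix.PosSemidef.spectrum_sqrt_mul_mul_sqrt_subset {n : Type*} [Fintype n] [DecidableEq n]
    {𝕜 : Type*} [RCLike 𝕜] {A B : Matrix n n 𝕜} (hA : A.PosSemidef) (hB : B.IsHermitian) :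
    spectrum ℝ (CFC.sqrt A * B * CFC.sqrt A) ⊆
      Set.Icc (min (‖toEuclideanCLM (𝕜 := 𝕜) A‖ * ⨅ i, hB.eigenvalues i) 0)
        (max (‖toEuclideanCLM (𝕜 := 𝕜) A‖ * ⨆ i, hB.eigenvalues i) 0) := by
  set S := CFC.sqrt A
  have hS : star S = S := (CFC.sqrt_nonneg A).isSelfAdjoint
  have hconj (c : ℝ) : S * algebraMap ℝ _ c * S = c • A := by
    rw [← Algebra.commutes, mul_assoc, CFC.sqrt_mul_sqrt_self A hA.nonneg, Algebra.smul_def]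
  have hA1 := hA.1.le_algebraMap_norm_toEuclideanCLM
  have hlower : algebraMap ℝ _ (min (‖toEuclideanCLM (𝕜 := 𝕜) A‖ * ⨅ i, hB.eigenvalues i) 0) ≤
      S * B * S := by
    refine (algebraMap_min_le_smul hA.nonneg hA1 _).trans ?_
    simpa only [hS, hconj] using
      star_left_conjugate_le_conjugate hB.algebraMap_iInf_eigenvalues_le S
  have hupper : S * B * S ≤
      algebraMap ℝ _ (max (‖toEuclideanCLM (𝕜 := 𝕜) A‖ * ⨆ i, hB.eigenvalues i) 0) := by
    refine le_trans ?_ (smul_le_algebraMap_max hA.nonneg hA1 _)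
    simpa only [hS, hconj] using
      star_left_conjugate_le_conjugate hB.le_algebraMap_iSup_eigenvalues S
  have hC := (hB.sqrt_mul_mul_sqrt A).isSelfAdjoint
  exact fun x hx => ⟨(algebraMap_le_iff_le_spectrum hC).mp hlower x hx,
    (le_algebraMap_iff_spectrum_le hC).mp hupper x hx⟩

/-- Lemma A.1. If `A` is symmetric positive semidefinite and `B` is
symmetric, then every complex eigenvalue `λ` of `AB` is real and satisfies
`min(‖A‖ λ_min(B), 0) ≤ λ ≤ max(‖A‖ λ_max(B), 0)`, where `‖A‖` is the Euclidean
operator norm of `A`. -/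
theorem statement12 {n : ℕ} (A B : Matrix (Fin n) (Fin n) ℝ)
    (hA : A.PosSemidef) (hB : B.IsHermitian) :
    ∀ lam ∈ spectrum ℂ ((A * B).map Complex.ofReal),
      ∃ r : ℝ, lam = (r : ℂ) ∧
        min (‖Matrix.toEuclideanCLM (𝕜 := ℝ) A‖ * (⨅ i, hB.eigenvalues i)) 0 ≤ r ∧
        r ≤ max (‖Matrix.toEuclideanCLM (𝕜 := ℝ) A‖ * (⨆ i, hB.eigenvalues i)) 0 := by
  intro lam hlam
  rcases eq_or_ne lam 0 with rfl | hlam0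
  · exact ⟨0, by simp, min_le_right _ _, le_max_right _ _⟩
  set S := CFC.sqrt A
  have hmap (M N : Matrix (Fin n) (Fin n) ℝ) :
      (M * N).map Complex.ofReal = M.map Complex.ofReal * N.map Complex.ofReal :=
    Matrix.map_mul (f := Complex.ofRealHom)
  have hlam' : lam ∈ spectrum ℂ ((S * B * S).map Complex.ofReal) := by
    have h : lam ∈ spectrum ℂ (S.map Complex.ofReal * (S * B).map Complex.ofReal) \ {0} := by
      rw [← hmap, ← mul_assoc, CFC.sqrt_mul_sqrt_self A hA.nonneg]
      exact ⟨hlam, hlam0⟩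
    rw [spectrum.nonzero_mul_comm, ← hmap] at h
    exact h.1
  obtain ⟨r, hr, rfl⟩ := (hB.sqrt_mul_mul_sqrt A).spectrum_map_ofReal ▸ hlam'
  exact ⟨r, rfl, hA.spectrum_sqrt_mul_mul_sqrt_subset hB hr⟩
end

section
/- Let f : ℝ^n → ℝ be twice continuously differentiable and μ-strongly convex with μ > 0, g : ℝ^n → (-∞, ∞] a proper closed convex function, ν > 0, and let x* satisfy F_ν(x*) = 0. Suppose ∂F_ν has nonempty compact images, is upper-semicontinuous at x*, and is a linear Newton approximation of F_ν at x*, i.e., ‖F_ν(x*) − F_ν(y) − A(x* − y)‖₂ = o(‖x* − y‖₂) as y → x*, uniformly over A ∈ ∂F_ν(y); suppose also every element of ∂F_ν(x) is nonsingular for every x ∈ ℝ^n. Then there exists ε > 0 such that every sequence (x^(k)) with ‖x^(1) − x*‖₂ < ε and x^(k+1) = x^(k) − A_k^{-1} F_ν(x^(k)) for some A_k ∈ ∂F_ν(x^(k)) converges to x* superlinearly: x^(k) → x* and ‖x^(k+1) − x*‖₂ = o(‖x^(k) − x*‖₂) as k → ∞. -/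
/-!
Near `x*` the inverses of the elements of `∂F_ν` are uniformly bounded: they are bounded on the
compact set `∂F_ν(x*)` of invertible operators, and upper semicontinuity moves every element of
`∂F_ν(y)` within `1 / (2M)` of that set, where a perturbation argument at most doubles the bound.
Writing `A (x⁺ - x*) = F_ν(x*) - F_ν(y) - A (x* - y)` for a Newton step `x⁺` from `y`, the linear
Newton approximation property then makes `‖x⁺ - x*‖` an arbitrarily small multiple of `‖y - x*‖`
once `y` is close to `x*`. Contraction by `1/2` keeps the iterates in that neighbourhood and gives
convergence, and the arbitrarily small factor gives superlinearity.
-/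

open Filter Topology RealInnerProductSpace

section LocalContraction

variable {E : Type*} [SeminormedAddCommGroup E] {xstar : E}

theorem norm_sub_le_pow_mul_of_local_contraction {P : E → E → Prop} {δ q : ℝ}
    (hq₀ : 0 ≤ q) (hq₁ : q ≤ 1)
    (hP : ∀ y z, ‖y - xstar‖ < δ → P y z → ‖z - xstar‖ ≤ q * ‖y - xstar‖)
    {x : ℕ → E} (hx₀ : ‖x 0 - xstar‖ < δ) (hx : ∀ k, P (x k) (x (k + 1))) (k : ℕ) :
    ‖x k - xstar‖ ≤ q ^ k * ‖x 0 - xstar‖ := by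
  induction k with
  | zero => simp
  | succ k ih =>
    have hclose : ‖x k - xstar‖ < δ :=
      ih.trans_lt <| (mul_le_of_le_one_left (norm_nonneg _) (pow_le_one₀ hq₀ hq₁)).trans_lt hx₀
    calc ‖x (k + 1) - xstar‖ ≤ q * ‖x k - xstar‖ := hP _ _ hclose (hx k)
      _ ≤ q * (q ^ k * ‖x 0 - xstar‖) := mul_le_mul_of_nonneg_left ih hq₀
      _ = q ^ (k + 1) * ‖x 0 - xstar‖ := by ring

theorem tendsto_and_superlinear_of_local_contraction {P : E → E → Prop}
    (hP : ∀ c > (0 : ℝ), ∃ δ > (0 : ℝ), ∀ y z, ‖y - xstar‖ < δ → P y z →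
      ‖z - xstar‖ ≤ c * ‖y - xstar‖) :
    ∃ ε > (0 : ℝ), ∀ x : ℕ → E, ‖x 0 - xstar‖ < ε → (∀ k, P (x k) (x (k + 1))) →
      Tendsto x atTop (𝓝 xstar) ∧
      ∀ c > (0 : ℝ), ∀ᶠ k in atTop, ‖x (k + 1) - xstar‖ ≤ c * ‖x k - xstar‖ := by
  obtain ⟨ε, hε, hhalf⟩ := hP (1 / 2) (by norm_num)
  refine ⟨ε, hε, fun x hx₀ hx => ?_⟩
  have hgeom : Tendsto (fun k : ℕ => (1 / 2 : ℝ) ^ k * ‖x 0 - xstar‖) atTop (𝓝 0) := by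
    simpa using (tendsto_pow_atTop_nhds_zero_of_lt_one (by norm_num : (0 : ℝ) ≤ 1 / 2)
      (by norm_num)).mul_const ‖x 0 - xstar‖
  have hdist : Tendsto (fun k => ‖x k - xstar‖) atTop (𝓝 0) :=
    squeeze_zero (fun _ => norm_nonneg _)
      (norm_sub_le_pow_mul_of_local_contraction (by norm_num) (by norm_num) hhalf hx₀ hx) hgeom
  refine ⟨tendsto_iff_norm_sub_tendsto_zero.mpr hdist, fun c hc => ?_⟩
  obtain ⟨δ, hδ, hcontr⟩ := hP c hc
  filter_upwards [hdist.eventually (gt_mem_nhds hδ)] with k hk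
  exact hcontr _ _ hk (hx k)

end LocalContraction

section InverseBounds

variable {R : Type*} [NormedRing R]

theorem norm_inverse_le_two_mul_of_norm_mul_norm_sub_le_half {a b : R} (ha : IsUnit a)
    (hb : IsUnit b) (h : ‖Ring.inverse a‖ * ‖b - a‖ ≤ 1 / 2) :
    ‖Ring.inverse b‖ ≤ 2 * ‖Ring.inverse a‖ := by
  have hb_inv : Ring.inverse b = Ring.inverse a - Ring.inverse a * (b - a) * Ring.inverse b := by
    rw [← Ring.inverse_sub_inverse (iff_of_true ha hb), sub_sub_cancel]
  have hle : ‖Ring.inverse b‖ ≤ ‖Ring.inverse a‖ + ‖Ring.inverse a‖ * ‖b - a‖ * ‖Ring.inverse b‖ :=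
    calc ‖Ring.inverse b‖
        = ‖Ring.inverse a - Ring.inverse a * (b - a) * Ring.inverse b‖ := congrArg norm hb_inv
      _ ≤ ‖Ring.inverse a‖ + ‖Ring.inverse a * (b - a) * Ring.inverse b‖ := norm_sub_le _ _
      _ ≤ ‖Ring.inverse a‖ + ‖Ring.inverse a‖ * ‖b - a‖ * ‖Ring.inverse b‖ := by
          gcongr
          exact norm_mul₃_le
  nlinarith [norm_nonneg (Ring.inverse b)]

variable [HasSummableGeomSeries R]

theorem IsCompact.exists_forall_norm_inverse_le {K : Set R} (hK : IsCompact K)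
    (hunit : ∀ a ∈ K, IsUnit a) : ∃ M > (0 : ℝ), ∀ a ∈ K, ‖Ring.inverse a‖ ≤ M := by
  obtain ⟨M, hM⟩ := hK.exists_bound_of_continuousOn (f := Ring.inverse) fun a ha =>
    (hunit a ha).unit_spec ▸ (NormedRing.inverse_continuousAt (hunit a ha).unit).continuousWithinAt
  exact ⟨max M 1, by positivity, fun a ha => (hM a ha).trans (le_max_left _ _)⟩

end InverseBounds

section NewtonStep

variable {𝕜 E R : Type*} [NontriviallyNormedField 𝕜] [NormedAddCommGroup E] [NormedSpace 𝕜 E]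
  [NormedRing R]

def HausdorffUpperSemicontinuousAt (𝒜 : E → Set R) (x : E) : Prop :=
  ∀ ε > (0 : ℝ), ∃ δ > (0 : ℝ), ∀ y, ‖y - x‖ < δ → ∀ U ∈ 𝒜 y, ∃ U' ∈ 𝒜 x, ‖U - U'‖ < ε

def IsLinearNewtonApproxAt (F : E → E) (𝒜 : E → Set (E →L[𝕜] E)) (x : E) : Prop :=
  ∀ ε > (0 : ℝ), ∃ δ > (0 : ℝ), ∀ y, ‖y - x‖ < δ → ∀ A ∈ 𝒜 y,
    ‖F x - F y - A (x - y)‖ ≤ ε * ‖x - y‖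

theorem HausdorffUpperSemicontinuousAt.exists_forall_norm_inverse_le [HasSummableGeomSeries R]
    {𝒜 : E → Set R} {x : E} (husc : HausdorffUpperSemicontinuousAt 𝒜 x)
    (hcompact : IsCompact (𝒜 x)) (hunit : ∀ y, ∀ a ∈ 𝒜 y, IsUnit a) :
    ∃ δ > (0 : ℝ), ∃ M > (0 : ℝ), ∀ y, ‖y - x‖ < δ → ∀ a ∈ 𝒜 y, ‖Ring.inverse a‖ ≤ M := by
  obtain ⟨M, hM, hbound⟩ := hcompact.exists_forall_norm_inverse_le (hunit x)
  obtain ⟨δ, hδ, hnear⟩ := husc (1 / (2 * M)) (by positivity)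
  refine ⟨δ, hδ, 2 * M, by positivity, fun y hy a ha => ?_⟩
  obtain ⟨a', ha', hdist⟩ := hnear y hy a ha
  have hsmall : ‖Ring.inverse a'‖ * ‖a - a'‖ ≤ 1 / 2 :=
    calc ‖Ring.inverse a'‖ * ‖a - a'‖ ≤ M * (1 / (2 * M)) :=
          mul_le_mul (hbound a' ha') hdist.le (norm_nonneg _) hM.le
      _ = 1 / 2 := by field_simp
  calc ‖Ring.inverse a‖ ≤ 2 * ‖Ring.inverse a'‖ :=
        norm_inverse_le_two_mul_of_norm_mul_norm_sub_le_half (hunit x a' ha') (hunit y a ha) hsmall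
    _ ≤ 2 * M := by linarith [hbound a' ha']

theorem norm_sub_le_of_newton_step {F : E → E} {A : E →L[𝕜] E} (hA : IsUnit A) {x y z : E}
    (hx : F x = 0) (hz : A (z - y) = -F y) :
    ‖z - x‖ ≤ ‖Ring.inverse A‖ * ‖F x - F y - A (x - y)‖ := by
  have hresidual : A (z - x) = F x - F y - A (x - y) := by
    rw [show z - x = (z - y) - (x - y) by abel, map_sub, hz, hx]
    abel
  calc ‖z - x‖ = ‖Ring.inverse A (A (z - x))‖ := by
        rw [← mul_apply_eq_comp, Ring.inverse_mul_cancel A hA, one_apply_eq_self]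
    _ ≤ ‖Ring.inverse A‖ * ‖F x - F y - A (x - y)‖ := hresidual ▸ (Ring.inverse A).le_opNorm _

theorem IsLinearNewtonApproxAt.norm_newton_step_le [CompleteSpace E] {F : E → E}
    {𝒜 : E → Set (E →L[𝕜] E)} {x : E} (hLNA : IsLinearNewtonApproxAt F 𝒜 x)
    (husc : HausdorffUpperSemicontinuousAt 𝒜 x) (hcompact : IsCompact (𝒜 x))
    (hunit : ∀ y, ∀ A ∈ 𝒜 y, IsUnit A) (hx : F x = 0) :
    ∀ c > (0 : ℝ), ∃ δ > (0 : ℝ), ∀ y z, ‖y - x‖ < δ → (∃ A ∈ 𝒜 y, A (z - y) = -F y) →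
      ‖z - x‖ ≤ c * ‖y - x‖ := by
  intro c hc
  obtain ⟨δ₁, hδ₁, M, hM, hbound⟩ := husc.exists_forall_norm_inverse_le hcompact hunit
  obtain ⟨δ₂, hδ₂, happrox⟩ := hLNA (c / M) (by positivity)
  refine ⟨min δ₁ δ₂, lt_min hδ₁ hδ₂, fun y z hy ⟨A, hA, hz⟩ => ?_⟩
  calc ‖z - x‖ ≤ ‖Ring.inverse A‖ * ‖F x - F y - A (x - y)‖ :=
        norm_sub_le_of_newton_step (hunit y A hA) hx hz
    _ ≤ M * (c / M * ‖x - y‖) :=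
        mul_le_mul (hbound y (hy.trans_le (min_le_left _ _)) A hA)
          (happrox y (hy.trans_le (min_le_right _ _)) A hA) (norm_nonneg _) hM.le
    _ = c * ‖y - x‖ := by rw [norm_sub_rev]; field_simp

end NewtonStep

theorem statement14_general {n : ℕ} (f : EuclideanSpace ℝ (Fin n) → ℝ)
    (ν : ℝ)
    (prox : EuclideanSpace ℝ (Fin n) → EuclideanSpace ℝ (Fin n))
    (xstar : EuclideanSpace ℝ (Fin n)) (hzero : Fnu f prox ν xstar = 0)
    (hcompact : ∀ x, IsCompact (DFnu f prox ν x))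
    (husc : ∀ ε > (0 : ℝ), ∃ δ > (0 : ℝ), ∀ y : EuclideanSpace ℝ (Fin n), ‖y - xstar‖ < δ →
      ∀ U ∈ DFnu f prox ν y, ∃ U' ∈ DFnu f prox ν xstar, ‖U - U'‖ < ε)
    (hLNA : ∀ ε > (0 : ℝ), ∃ δ > (0 : ℝ), ∀ y : EuclideanSpace ℝ (Fin n), ‖y - xstar‖ < δ →
      ∀ A ∈ DFnu f prox ν y,
        ‖Fnu f prox ν xstar - Fnu f prox ν y - A (xstar - y)‖ ≤ ε * ‖xstar - y‖)
    (hnonsing : ∀ x : EuclideanSpace ℝ (Fin n), ∀ A ∈ DFnu f prox ν x, Function.Bijective A) :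
    ∃ ε > (0 : ℝ), ∀ (x : ℕ → EuclideanSpace ℝ (Fin n))
      (A : ℕ → (EuclideanSpace ℝ (Fin n) →L[ℝ] EuclideanSpace ℝ (Fin n))),
      ‖x 0 - xstar‖ < ε →
      (∀ k, A k ∈ DFnu f prox ν (x k)) →
      (∀ k, A k (x (k + 1) - x k) = -(Fnu f prox ν (x k))) →
      Tendsto x atTop (𝓝 xstar) ∧
      ∀ c > (0 : ℝ), ∀ᶠ k in atTop, ‖x (k + 1) - xstar‖ ≤ c * ‖x k - xstar‖ := by
  have hunit : ∀ y, ∀ A ∈ DFnu f prox ν y, IsUnit A := fun y A hA =>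
    ContinuousLinearMap.isUnit_iff_bijective.mpr (hnonsing y A hA)
  obtain ⟨ε, hε, hconv⟩ := tendsto_and_superlinear_of_local_contraction
    (IsLinearNewtonApproxAt.norm_newton_step_le hLNA husc (hcompact xstar) hunit hzero)
  exact ⟨ε, hε, fun x A hx₀ hA hstep => hconv x hx₀ fun k => ⟨A k, hA k, hstep k⟩⟩

/-- Theorem 3.4, superlinear case. Under the stated assumptions, the
linear Newton iteration `x^(k+1) = x^(k) − A_k⁻¹ F_ν(x^(k))`, `A_k ∈ ∂F_ν(x^(k))`
(equivalently `A_k (x^(k+1) − x^(k)) = −F_ν(x^(k))`), converges locally superlinearly to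
the zero `x*` of `F_ν`. -/
theorem statement14 {n : ℕ} (f : EuclideanSpace ℝ (Fin n) → ℝ) (μ : ℝ) (hμ : 0 < μ)
    (hf : ContDiff ℝ 2 f)
    (hstrong : ∀ x v : EuclideanSpace ℝ (Fin n), μ * ‖v‖ ^ 2 ≤ ⟪v, fderiv ℝ (gradient f) x v⟫)
    (g : EuclideanSpace ℝ (Fin n) → EReal)
    (hg_nebot : ∀ x, g x ≠ ⊥) (hg_proper : ∃ x, g x ≠ ⊤)
    (hg_closed : LowerSemicontinuous g)
    (hg_conv : ∀ x y : EuclideanSpace ℝ (Fin n), ∀ a b : ℝ, 0 ≤ a → 0 ≤ b → a + b = 1 →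
      g (a • x + b • y) ≤ (a : EReal) * g x + (b : EReal) * g y)
    (ν : ℝ) (hν : 0 < ν)
    (prox : EuclideanSpace ℝ (Fin n) → EuclideanSpace ℝ (Fin n))
    (hprox : ∀ w, IsMinOn
      (fun z => (ν : EReal) * g z + ((‖z - w‖ ^ 2 / 2 : ℝ) : EReal)) Set.univ (prox w))
    (xstar : EuclideanSpace ℝ (Fin n)) (hzero : Fnu f prox ν xstar = 0)
    (hnonempty : ∀ x, (DFnu f prox ν x).Nonempty)
    (hcompact : ∀ x, IsCompact (DFnu f prox ν x))
    (husc : ∀ ε > (0 : ℝ), ∃ δ > (0 : ℝ), ∀ y : EuclideanSpace ℝ (Fin n), ‖y - xstar‖ < δ →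
      ∀ U ∈ DFnu f prox ν y, ∃ U' ∈ DFnu f prox ν xstar, ‖U - U'‖ < ε)
    (hLNA : ∀ ε > (0 : ℝ), ∃ δ > (0 : ℝ), ∀ y : EuclideanSpace ℝ (Fin n), ‖y - xstar‖ < δ →
      ∀ A ∈ DFnu f prox ν y,
        ‖Fnu f prox ν xstar - Fnu f prox ν y - A (xstar - y)‖ ≤ ε * ‖xstar - y‖)
    (hnonsing : ∀ x : EuclideanSpace ℝ (Fin n), ∀ A ∈ DFnu f prox ν x, Function.Bijective A) :
    ∃ ε > (0 : ℝ), ∀ (x : ℕ → EuclideanSpace ℝ (Fin n))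
      (A : ℕ → (EuclideanSpace ℝ (Fin n) →L[ℝ] EuclideanSpace ℝ (Fin n))),
      ‖x 0 - xstar‖ < ε →
      (∀ k, A k ∈ DFnu f prox ν (x k)) →
      (∀ k, A k (x (k + 1) - x k) = -(Fnu f prox ν (x k))) →
      Tendsto x atTop (𝓝 xstar) ∧
      ∀ c > (0 : ℝ), ∀ᶠ k in atTop, ‖x (k + 1) - xstar‖ ≤ c * ‖x k - xstar‖ :=
  statement14_general f ν prox xstar hzero hcompact husc hLNA hnonsing
end

section
/- Let f : ℝ^n → ℝ be twice continuously differentiable and μ-strongly convex with μ > 0, g : ℝ^n → (-∞, ∞] a proper closed convex function, ν > 0, and let x* satisfy F_ν(x*) = 0. Suppose ∂F_ν has nonempty compact images, is upper-semicontinuous at x*, and is a strong linear Newton approximation of F_ν at x*, i.e., ‖F_ν(x*) − F_ν(y) − A(x* − y)‖₂ = O(‖x* − y‖₂²) as y → x*, uniformly over A ∈ ∂F_ν(y); suppose also every element of ∂F_ν(x) is nonsingular for every x ∈ ℝ^n. Then there exist ε > 0 and C > 0 such that every sequence (x^(k)) with ‖x^(1) − x*‖₂ < ε and x^(k+1) =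 x^(k) − A_k^{-1} F_ν(x^(k)) for some A_k ∈ ∂F_ν(x^(k)) converges to x* quadratically: x^(k) → x* and ‖x^(k+1) − x*‖₂ ≤ C ‖x^(k) − x*‖₂² for all sufficiently large k. -/
open Filter Topology RealInnerProductSpace

/-!
Compactness of `∂F_ν(x*)` and nonsingularity of its elements bound the inverses there by some
`M`; upper semicontinuity at `x*` carries the bound `2M` over to `∂F_ν(y)` for `y` near `x*`.
Since `F_ν(x*) = 0`, the Newton step satisfies
`A_k (x^(k+1) − x*) = F_ν(x*) − F_ν(x^(k)) − A_k (x* − x^(k))`, so the strong Newton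
approximation gives `‖x^(k+1) − x*‖ ≤ 2MC ‖x^(k) − x*‖²`; close to `x*` this also halves the
error, which keeps the iterates close and makes them converge.
-/

section LinearNewton

variable {𝕜 E : Type*} [NontriviallyNormedField 𝕜] [NormedAddCommGroup E] [NormedSpace 𝕜 E]

theorem IsCompact.exists_norm_le_mul_norm_apply_of_isUnit [CompleteSpace E]
    {S : Set (E →L[𝕜] E)} (hS : IsCompact S) (hunit : ∀ A ∈ S, IsUnit A) :
    ∃ M > (0 : ℝ), ∀ A ∈ S, ∀ v, ‖v‖ ≤ M * ‖A v‖ := by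
  have hcont : ContinuousOn (fun A => ‖Ring.inverse A‖) S := fun A hA => by
    obtain ⟨u, rfl⟩ := hunit A hA
    exact (NormedRing.inverse_continuousAt u).norm.continuousWithinAt
  obtain ⟨C, hC⟩ := hS.exists_bound_of_continuousOn hcont
  refine ⟨max C 1, by positivity, fun A hA v => ?_⟩
  obtain ⟨u, rfl⟩ := hunit A hA
  calc ‖v‖ = ‖Ring.inverse (u : E →L[𝕜] E) ((u : E →L[𝕜] E) v)‖ := by
        rw [Ring.inverse_unit, ← mul_apply_eq_comp, Units.inv_mul, one_apply_eq_self]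
    _ ≤ ‖Ring.inverse (u : E →L[𝕜] E)‖ * ‖(u : E →L[𝕜] E) v‖ :=
        ContinuousLinearMap.le_opNorm _ _
    _ ≤ max C 1 * ‖(u : E →L[𝕜] E) v‖ := by
        gcongr
        exact le_max_of_le_left ((Real.le_norm_self _).trans (hC u hA))

theorem norm_le_two_mul_mul_norm_apply_of_norm_sub_lt {A A' : E →L[𝕜] E} {M : ℝ} (hM : 0 < M)
    (hA' : ∀ v, ‖v‖ ≤ M * ‖A' v‖) (hAA' : ‖A - A'‖ < 1 / (2 * M)) (v : E) :
    ‖v‖ ≤ 2 * M * ‖A v‖ := by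
  have htri : ‖A' v‖ ≤ ‖A v‖ + ‖(A - A') v‖ := by
    simpa using norm_sub_le (A v) ((A - A') v)
  have hpert : M * ‖(A - A') v‖ ≤ ‖v‖ / 2 :=
    calc M * ‖(A - A') v‖ ≤ M * (1 / (2 * M) * ‖v‖) := by
          gcongr; exact (A - A').le_of_opNorm_le hAA'.le v
      _ = ‖v‖ / 2 := by field_simp
  linarith [hA' v, mul_le_mul_of_nonneg_left htri hM.le]

theorem norm_newton_step_sub_le {F : E → E} {A : E →L[𝕜] E} {xstar x x' : E} {K C : ℝ}
    (hK : 0 ≤ K) (hzero : F xstar = 0) (hstep : A (x' - x) = -F x)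
    (hA : ∀ v, ‖v‖ ≤ K * ‖A v‖)
    (happrox : ‖F xstar - F x - A (xstar - x)‖ ≤ C * ‖xstar - x‖ ^ 2) :
    ‖x' - xstar‖ ≤ K * C * ‖x - xstar‖ ^ 2 := by
  have hres : A (x' - xstar) = F xstar - F x - A (xstar - x) := by
    rw [show x' - xstar = (x' - x) + (x - xstar) by abel, map_add, hstep, map_sub, map_sub,
      hzero]
    abel
  calc ‖x' - xstar‖ ≤ K * ‖A (x' - xstar)‖ := hA _
    _ ≤ K * (C * ‖x - xstar‖ ^ 2) := by
        rw [hres, ← norm_neg (x - xstar), neg_sub]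
        gcongr
    _ = K * C * ‖x - xstar‖ ^ 2 := by ring

end LinearNewton

section QuadraticContraction

variable {e : ℕ → ℝ} {C ε : ℝ}

theorem le_half_of_le_mul_sq (hC : 0 ≤ C) (hCε : C * ε ≤ 1 / 2) (he : ∀ k, 0 ≤ e k)
    (hstep : ∀ k, e k < ε → e (k + 1) ≤ C * e k ^ 2) {k : ℕ} (hk : e k < ε) :
    e (k + 1) ≤ 1 / 2 * e k :=
  calc e (k + 1) ≤ C * e k * e k := by simpa [sq, mul_assoc] using hstep k hk
    _ ≤ C * ε * e k := by gcongr; exact he k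
    _ ≤ 1 / 2 * e k := by gcongr; exact he k

theorem forall_lt_of_le_mul_sq (hC : 0 ≤ C) (hCε : C * ε ≤ 1 / 2) (he : ∀ k, 0 ≤ e k)
    (h0 : e 0 < ε) (hstep : ∀ k, e k < ε → e (k + 1) ≤ C * e k ^ 2) (k : ℕ) : e k < ε := by
  induction k with
  | zero => exact h0
  | succ k ih => linarith [le_half_of_le_mul_sq hC hCε he hstep ih, he k]

theorem tendsto_zero_of_le_mul_sq (hC : 0 ≤ C) (hCε : C * ε ≤ 1 / 2) (he : ∀ k, 0 ≤ e k)
    (h0 : e 0 < ε) (hstep : ∀ k, e k < ε → e (k + 1) ≤ C * e k ^ 2) :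
    Tendsto e atTop (𝓝 0) := by
  have hgeom (k : ℕ) : e k ≤ (1 / 2) ^ k * e 0 := le_geom (by norm_num) k fun j _ =>
    le_half_of_le_mul_sq hC hCε he hstep (forall_lt_of_le_mul_sq hC hCε he h0 hstep j)
  refine squeeze_zero he hgeom ?_
  simpa using (tendsto_pow_atTop_nhds_zero_of_lt_one (by norm_num : (0 : ℝ) ≤ 1 / 2)
    (by norm_num)).mul_const (e 0)

end QuadraticContraction

theorem statement15_general {n : ℕ} (f : EuclideanSpace ℝ (Fin n) → ℝ)
    (ν : ℝ)
    (prox : EuclideanSpace ℝ (Fin n) → EuclideanSpace ℝ (Fin n))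
    (xstar : EuclideanSpace ℝ (Fin n)) (hzero : Fnu f prox ν xstar = 0)
    (hcompact : ∀ x, IsCompact (DFnu f prox ν x))
    (husc : ∀ ε > (0 : ℝ), ∃ δ > (0 : ℝ), ∀ y : EuclideanSpace ℝ (Fin n), ‖y - xstar‖ < δ →
      ∀ U ∈ DFnu f prox ν y, ∃ U' ∈ DFnu f prox ν xstar, ‖U - U'‖ < ε)
    (hsLNA : ∃ C > (0 : ℝ), ∃ δ > (0 : ℝ), ∀ y : EuclideanSpace ℝ (Fin n), ‖y - xstar‖ < δ →
      ∀ A ∈ DFnu f prox ν y,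
        ‖Fnu f prox ν xstar - Fnu f prox ν y - A (xstar - y)‖ ≤ C * ‖xstar - y‖ ^ 2)
    (hnonsing : ∀ x : EuclideanSpace ℝ (Fin n), ∀ A ∈ DFnu f prox ν x, Function.Bijective A) :
    ∃ ε > (0 : ℝ), ∃ C > (0 : ℝ), ∀ (x : ℕ → EuclideanSpace ℝ (Fin n))
      (A : ℕ → (EuclideanSpace ℝ (Fin n) →L[ℝ] EuclideanSpace ℝ (Fin n))),
      ‖x 0 - xstar‖ < ε →
      (∀ k, A k ∈ DFnu f prox ν (x k)) →
      (∀ k, A k (x (k + 1) - x k) = -(Fnu f prox ν (x k))) →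
      Tendsto x atTop (𝓝 xstar) ∧
      ∀ᶠ k in atTop, ‖x (k + 1) - xstar‖ ≤ C * ‖x k - xstar‖ ^ 2 := by
  obtain ⟨M, hM, hinv⟩ := (hcompact xstar).exists_norm_le_mul_norm_apply_of_isUnit
    fun A hA => ContinuousLinearMap.isUnit_iff_bijective.2 (hnonsing xstar A hA)
  obtain ⟨δ₁, hδ₁, hclose⟩ := husc (1 / (2 * M)) (by positivity)
  obtain ⟨C₀, hC₀, δ₂, hδ₂, happrox⟩ := hsLNA
  set C := 2 * M * C₀
  set ε := min (min δ₁ δ₂) (1 / (2 * C))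
  have hC : 0 < C := by positivity
  have hCε : C * ε ≤ 1 / 2 := by
    calc C * ε ≤ C * (1 / (2 * C)) := by gcongr; exact min_le_right _ _
      _ = 1 / 2 := by field_simp
  refine ⟨ε, by positivity, C, hC, fun x A hx0 hA hstep => ?_⟩
  have hquad (k : ℕ) (hk : ‖x k - xstar‖ < ε) : ‖x (k + 1) - xstar‖ ≤ C * ‖x k - xstar‖ ^ 2 := by
    have hk₁ : ‖x k - xstar‖ < δ₁ := hk.trans_le ((min_le_left _ _).trans (min_le_left _ _))
    have hk₂ : ‖x k - xstar‖ < δ₂ := hk.trans_le ((min_le_left _ _).trans (min_le_right _ _))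
    obtain ⟨A', hA', hAA'⟩ := hclose (x k) hk₁ (A k) (hA k)
    have hAinv := norm_le_two_mul_mul_norm_apply_of_norm_sub_lt hM (hinv A' hA') hAA'
    exact norm_newton_step_sub_le (by positivity) hzero (hstep k) hAinv
      (happrox (x k) hk₂ (A k) (hA k))
  have hnorm (k : ℕ) : 0 ≤ ‖x k - xstar‖ := norm_nonneg _
  have hsmall := forall_lt_of_le_mul_sq hC.le hCε hnorm hx0 hquad
  exact ⟨tendsto_iff_norm_sub_tendsto_zero.2 <|
      tendsto_zero_of_le_mul_sq hC.le hCε hnorm hx0 hquad,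
    Eventually.of_forall fun k => hquad k (hsmall k)⟩

/-- Theorem 3.4, quadratic case. Under the stated assumptions, with
`∂F_ν` a *strong* linear Newton approximation of `F_ν` at `x*`, the linear Newton
iteration `A_k (x^(k+1) − x^(k)) = −F_ν(x^(k))`, `A_k ∈ ∂F_ν(x^(k))`, converges locally
quadratically to the zero `x*` of `F_ν`. -/
theorem statement15 {n : ℕ} (f : EuclideanSpace ℝ (Fin n) → ℝ) (μ : ℝ) (hμ : 0 < μ)
    (hf : ContDiff ℝ 2 f)
    (hstrong : ∀ x v : EuclideanSpace ℝ (Fin n), μ * ‖v‖ ^ 2 ≤ ⟪v, fderiv ℝ (gradient f) x v⟫)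
    (g : EuclideanSpace ℝ (Fin n) → EReal)
    (hg_nebot : ∀ x, g x ≠ ⊥) (hg_proper : ∃ x, g x ≠ ⊤)
    (hg_closed : LowerSemicontinuous g)
    (hg_conv : ∀ x y : EuclideanSpace ℝ (Fin n), ∀ a b : ℝ, 0 ≤ a → 0 ≤ b → a + b = 1 →
      g (a • x + b • y) ≤ (a : EReal) * g x + (b : EReal) * g y)
    (ν : ℝ) (hν : 0 < ν)
    (prox : EuclideanSpace ℝ (Fin n) → EuclideanSpace ℝ (Fin n))
    (hprox : ∀ w, IsMinOn
      (fun z => (ν : EReal) * g z + ((‖z - w‖ ^ 2 / 2 : ℝ) : EReal)) Set.univ (prox w))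
    (xstar : EuclideanSpace ℝ (Fin n)) (hzero : Fnu f prox ν xstar = 0)
    (hnonempty : ∀ x, (DFnu f prox ν x).Nonempty)
    (hcompact : ∀ x, IsCompact (DFnu f prox ν x))
    (husc : ∀ ε > (0 : ℝ), ∃ δ > (0 : ℝ), ∀ y : EuclideanSpace ℝ (Fin n), ‖y - xstar‖ < δ →
      ∀ U ∈ DFnu f prox ν y, ∃ U' ∈ DFnu f prox ν xstar, ‖U - U'‖ < ε)
    (hsLNA : ∃ C > (0 : ℝ), ∃ δ > (0 : ℝ), ∀ y : EuclideanSpace ℝ (Fin n), ‖y - xstar‖ < δ →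
      ∀ A ∈ DFnu f prox ν y,
        ‖Fnu f prox ν xstar - Fnu f prox ν y - A (xstar - y)‖ ≤ C * ‖xstar - y‖ ^ 2)
    (hnonsing : ∀ x : EuclideanSpace ℝ (Fin n), ∀ A ∈ DFnu f prox ν x, Function.Bijective A) :
    ∃ ε > (0 : ℝ), ∃ C > (0 : ℝ), ∀ (x : ℕ → EuclideanSpace ℝ (Fin n))
      (A : ℕ → (EuclideanSpace ℝ (Fin n) →L[ℝ] EuclideanSpace ℝ (Fin n))),
      ‖x 0 - xstar‖ < ε →
      (∀ k, A k ∈ DFnu f prox ν (x k)) →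
      (∀ k, A k (x (k + 1) - x k) = -(Fnu f prox ν (x k))) →
      Tendsto x atTop (𝓝 xstar) ∧
      ∀ᶠ k in atTop, ‖x (k + 1) - xstar‖ ≤ C * ‖x k - xstar‖ ^ 2 :=
  statement15_general f ν prox xstar hzero hcompact husc hsLNA hnonsing
end
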